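/- arXiv:2002.11182 — 11 statements merged into one kernel-verified Lean document; each statement's English description precedes it below -/
import Mathlib

section
/- Let V ∈ ℝ^{d×d} be symmetric with V ⪰ I_d and let A ∈ ℝ^{d×m} be a matrix with operator norm ‖A‖₂ ≤ 1. Then for every w ∈ ℝ^d it holds that ‖Aᵀ V^{-1} w‖² ≤ 2 · log det(I_m + Aᵀ V^{-1} A) · (wᵀ V^{-1} w). -/
/-!
With `P = V⁻¹` and `y = Aᵀ P w`: since `V ⪰ I` we have `0 ⪯ P ⪯ I`, hence `M = Aᵀ P A` satisfies
`0 ⪯ M ⪯ Aᵀ A ⪯ I`. Cauchy–Schwarz for the semi-inner product `⟨x, z⟩_P = xᵀ P z` gives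
`‖y‖⁴ = ⟨A y, w⟩_P² ≤ (yᵀ M y) (wᵀ P w) ≤ λ_max(M) ‖y‖² (wᵀ P w)`, and every eigenvalue
`λ ∈ [0, 1]` of `M` satisfies `λ ≤ 2 log (1 + λ) ≤ 2 ∑ᵢ log (1 + λᵢ) = 2 log det (I + M)`.
-/

open Matrix

open scoped MatrixOrder ComplexOrder

lemma le_two_mul_log_one_add {x : ℝ} (h0 : 0 ≤ x) (h1 : x ≤ 1) : x ≤ 2 * Real.log (1 + x) := by
  have := Real.one_sub_inv_le_log_of_pos (x := 1 + x) (by linarith)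
  have hx : x / 2 ≤ 1 - (1 + x)⁻¹ := by
    rw [show 1 - (1 + x)⁻¹ = x / (1 + x) by field_simp; ring]
    exact div_le_div_of_nonneg_left h0 (by linarith) (by linarith)
  linarith

namespace Matrix

variable {n m : Type*} [Fintype n] [Fintype m]

lemma PosSemidef.dotProduct_mulVec_sq_le {P : Matrix n n ℝ} (hP : P.PosSemidef) (x y : n → ℝ) :
    (x ⬝ᵥ (P *ᵥ y)) ^ 2 ≤ (x ⬝ᵥ (P *ᵥ x)) * (y ⬝ᵥ (P *ᵥ y)) := by
  let _ := P.toSeminormedAddCommGroup hP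
  let _ := P.toInnerProductSpace hP
  have hsymm : P *ᵥ x ⬝ᵥ y = x ⬝ᵥ (P *ᵥ y) := by
    rw [dotProduct_mulVec, ← mulVec_transpose, ← conjTranspose_eq_transpose_of_trivial,
      hP.isHermitian.eq, dotProduct_comm]
  have := real_inner_mul_inner_self_le y x
  change (P *ᵥ x ⬝ᵥ y) * (P *ᵥ x ⬝ᵥ y) ≤ (P *ᵥ y ⬝ᵥ y) * (P *ᵥ x ⬝ᵥ x) at this
  rw [hsymm, dotProduct_comm (P *ᵥ y), dotProduct_comm (P *ᵥ x)] at this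
  linarith

lemma conjTranspose_mul_mul_mono {𝕜 : Type*} [RCLike 𝕜] {P Q : Matrix n n 𝕜} (h : P ≤ Q)
    (A : Matrix n m 𝕜) : Aᴴ * P * A ≤ Aᴴ * Q * A := by
  rw [le_iff, ← Matrix.sub_mul, ← Matrix.mul_sub]
  exact (le_iff.1 h).conjTranspose_mul_mul_same A

variable [DecidableEq n]

lemma inv_le_one_of_one_le {𝕜 : Type*} [RCLike 𝕜] {V : Matrix n n 𝕜} (h : 1 ≤ V) : V⁻¹ ≤ 1 := by
  have hV : (V - 1).PosSemidef := le_iff.1 h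
  have hVunit : IsUnit V.det := by
    simpa using (PosDef.one.add_posSemidef hV).det_pos.ne'.isUnit
  have hVinv : (V⁻¹)ᴴ = V⁻¹ := by
    simpa using (hV.isHermitian.add isHermitian_one).inv.eq
  -- `1 - V⁻¹ = V⁻¹ (V - 1) V V⁻¹`, and `V = (V - 1) + 1` splits this into two Gram-type terms.
  have hsplit : 1 - V⁻¹ = (V⁻¹)ᴴ * (V - 1) * V⁻¹ + ((V - 1) * V⁻¹)ᴴ * ((V - 1) * V⁻¹) := by
    rw [conjTranspose_mul, hV.isHermitian.eq, hVinv]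
    calc 1 - V⁻¹ = V⁻¹ * (V - 1) * (1 + (V - 1)) * V⁻¹ := by
          rw [add_sub_cancel, Matrix.mul_assoc _ V, mul_nonsing_inv V hVunit, Matrix.mul_one,
            Matrix.mul_sub, nonsing_inv_mul V hVunit, Matrix.mul_one]
      _ = _ := by noncomm_ring
  rw [le_iff, hsplit]
  exact (hV.conjTranspose_mul_mul_same V⁻¹).add (posSemidef_conjTranspose_mul_self _)

lemma dotProduct_mulVec_le_of_le_algebraMap {M : Matrix n n ℝ} {c : ℝ}
    (h : M ≤ algebraMap ℝ _ c) (x : n → ℝ) : x ⬝ᵥ (M *ᵥ x) ≤ c * (x ⬝ᵥ x) := by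
  have := (le_iff.1 h).dotProduct_mulVec_nonneg x
  simpa [Algebra.algebraMap_eq_smul_one, sub_mulVec, dotProduct_sub, smul_mulVec] using this

lemma IsHermitian.le_algebraMap_iff_eigenvalues_le {M : Matrix n n ℝ} (hM : M.IsHermitian)
    {c : ℝ} : M ≤ algebraMap ℝ _ c ↔ ∀ i, hM.eigenvalues i ≤ c := by
  rw [le_algebraMap_iff_spectrum_le hM.isSelfAdjoint, hM.spectrum_real_eq_range_eigenvalues,
    Set.forall_mem_range]

lemma IsHermitian.det_one_add {M : Matrix n n ℝ} (hM : M.IsHermitian) :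
    det (1 + M) = ∏ i, (1 + hM.eigenvalues i) := by
  have hcfc : 1 + M = cfc (fun x : ℝ => 1 + x) M := by
    rw [cfc_const_add (1 : ℝ) (fun x : ℝ => x) M, cfc_id' ℝ M, Algebra.algebraMap_eq_smul_one,
      one_smul]
  rw [hcfc, hM.cfc_eq, IsHermitian.cfc]
  simp [-Unitary.conjStarAlgAut_apply]

lemma PosSemidef.log_det_one_add {M : Matrix n n ℝ} (hM : M.PosSemidef) :
    Real.log (det (1 + M)) = ∑ i, Real.log (1 + hM.isHermitian.eigenvalues i) := by
  rw [hM.isHermitian.det_one_add, Real.log_prod]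
  exact fun i _ => by linarith [hM.eigenvalues_nonneg i]

lemma PosSemidef.log_det_one_add_nonneg {M : Matrix n n ℝ} (hM : M.PosSemidef) :
    0 ≤ Real.log (det (1 + M)) := by
  rw [hM.log_det_one_add]
  exact Finset.sum_nonneg fun i _ => Real.log_nonneg (by linarith [hM.eigenvalues_nonneg i])

lemma PosSemidef.le_two_mul_log_det_one_add {M : Matrix n n ℝ} (hM : M.PosSemidef) (h1 : M ≤ 1) :
    M ≤ algebraMap ℝ _ (2 * Real.log (det (1 + M))) := by
  have heig1 := (hM.isHermitian.le_algebraMap_iff_eigenvalues_le (c := 1)).1 (by simpa using h1)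
  rw [hM.isHermitian.le_algebraMap_iff_eigenvalues_le, hM.log_det_one_add]
  intro i
  calc hM.isHermitian.eigenvalues i
      ≤ 2 * Real.log (1 + hM.isHermitian.eigenvalues i) :=
        le_two_mul_log_one_add (hM.eigenvalues_nonneg i) (heig1 i)
    _ ≤ 2 * ∑ j, Real.log (1 + hM.isHermitian.eigenvalues j) := by
        gcongr
        exact Finset.single_le_sum (f := fun j => Real.log (1 + hM.isHermitian.eigenvalues j))
          (fun j _ => Real.log_nonneg (by linarith [hM.eigenvalues_nonneg j])) (Finset.mem_univ i)

lemma PosSemidef.dotProduct_self_transpose_mulVec_le {P : Matrix m m ℝ} (hP : P.PosSemidef)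
    {A : Matrix m n ℝ} {c : ℝ} (hc : 0 ≤ c) (h : Aᵀ * P * A ≤ algebraMap ℝ _ c) (w : m → ℝ) :
    (Aᵀ *ᵥ (P *ᵥ w)) ⬝ᵥ (Aᵀ *ᵥ (P *ᵥ w)) ≤ c * (w ⬝ᵥ (P *ᵥ w)) := by
  set y := Aᵀ *ᵥ (P *ᵥ w)
  have hy : y ⬝ᵥ y = (A *ᵥ y) ⬝ᵥ (P *ᵥ w) := by
    rw [dotProduct_mulVec, vecMul_transpose]
  have hquad : (A *ᵥ y) ⬝ᵥ (P *ᵥ (A *ᵥ y)) = y ⬝ᵥ ((Aᵀ * P * A) *ᵥ y) := by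
    rw [← mulVec_mulVec, ← mulVec_mulVec, dotProduct_mulVec y Aᵀ, vecMul_transpose]
  have hq : 0 ≤ w ⬝ᵥ (P *ᵥ w) := by simpa using hP.dotProduct_mulVec_nonneg w
  have hsq : (y ⬝ᵥ y) * (y ⬝ᵥ y) ≤ (y ⬝ᵥ y) * (c * (w ⬝ᵥ (P *ᵥ w))) :=
    calc (y ⬝ᵥ y) * (y ⬝ᵥ y) = ((A *ᵥ y) ⬝ᵥ (P *ᵥ w)) ^ 2 := by rw [← hy, sq]
      _ ≤ y ⬝ᵥ ((Aᵀ * P * A) *ᵥ y) * (w ⬝ᵥ (P *ᵥ w)) := by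
        rw [← hquad]; exact hP.dotProduct_mulVec_sq_le (A *ᵥ y) w
      _ ≤ c * (y ⬝ᵥ y) * (w ⬝ᵥ (P *ᵥ w)) :=
        mul_le_mul_of_nonneg_right (dotProduct_mulVec_le_of_le_algebraMap h y) hq
      _ = (y ⬝ᵥ y) * (c * (w ⬝ᵥ (P *ᵥ w))) := by ring
  rcases (dotProduct_self_star_nonneg y).eq_or_lt with hy0 | hy0
  · rw [star_trivial] at hy0
    rw [← hy0]
    exact mul_nonneg hc hq
  · exact le_of_mul_le_mul_left hsq (by simpa using hy0)

end Matrix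

theorem stmt2_general (d m : ℕ) (V : Matrix (Fin d) (Fin d) ℝ)
    (hVI : (V - (1 : Matrix (Fin d) (Fin d) ℝ)).PosSemidef)
    (A : Matrix (Fin d) (Fin m) ℝ)
    (hA : ((1 : Matrix (Fin m) (Fin m) ℝ) - Aᵀ * A).PosSemidef)
    (w : Fin d → ℝ) :
    (Aᵀ *ᵥ (V⁻¹ *ᵥ w)) ⬝ᵥ (Aᵀ *ᵥ (V⁻¹ *ᵥ w)) ≤
      2 * Real.log (Matrix.det ((1 : Matrix (Fin m) (Fin m) ℝ) + Aᵀ * V⁻¹ * A)) *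
        (w ⬝ᵥ (V⁻¹ *ᵥ w)) := by
  have hV : 1 ≤ V := le_iff.2 hVI
  have hP : V⁻¹.PosSemidef := (nonneg_iff_posSemidef.1 (zero_le_one.trans hV)).inv
  have hAt : Aᴴ = Aᵀ := conjTranspose_eq_transpose_of_trivial A
  have hM : (Aᵀ * V⁻¹ * A).PosSemidef := hAt ▸ hP.conjTranspose_mul_mul_same A
  have hM1 : Aᵀ * V⁻¹ * A ≤ 1 := by
    have := conjTranspose_mul_mul_mono (inv_le_one_of_one_le hV) A
    rw [hAt, Matrix.mul_one] at this
    exact this.trans (le_iff.2 hA)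
  exact hP.dotProduct_self_transpose_mulVec_le (mul_nonneg zero_le_two hM.log_det_one_add_nonneg)
    (hM.le_two_mul_log_det_one_add hM1) w

/-- For a symmetric matrix `V ⪰ I_d` and a `d × m` matrix `A` with operator
norm at most `1` (encoded as `AᵀA ⪯ I_m`), every `w ∈ ℝ^d` satisfies
`‖Aᵀ V⁻¹ w‖² ≤ 2 * log det (I_m + Aᵀ V⁻¹ A) * (wᵀ V⁻¹ w)`. -/
theorem stmt2 (d m : ℕ) (V : Matrix (Fin d) (Fin d) ℝ) (hVsymm : V.IsHermitian)
    (hVI : (V - (1 : Matrix (Fin d) (Fin d) ℝ)).PosSemidef)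
    (A : Matrix (Fin d) (Fin m) ℝ)
    (hA : ((1 : Matrix (Fin m) (Fin m) ℝ) - Aᵀ * A).PosSemidef)
    (w : Fin d → ℝ) :
    (Aᵀ *ᵥ (V⁻¹ *ᵥ w)) ⬝ᵥ (Aᵀ *ᵥ (V⁻¹ *ᵥ w)) ≤
      2 * Real.log (Matrix.det ((1 : Matrix (Fin m) (Fin m) ℝ) + Aᵀ * V⁻¹ * A)) *
        (w ⬝ᵥ (V⁻¹ *ᵥ w)) :=
  stmt2_general d m V hVI A hA w
end

section
/- Let X be a finite nonempty set and let Δ : X → ℝ and I : X → ℝ be functions with Δ(x) ≥ 0 and I(x) ≥ 0 for all x ∈ X. For a probability distribution μ on X write Δ(μ) = Σ_{x∈X} μ(x)·Δ(x) and I(μ) = Σ_{x∈X} μ(x)·I(x). Suppose μ is a probability distribution on X with I(μ) > 0 such that Δ(μ)²·I(ν) ≤ Δ(ν)²·I(μ) for every probability distribution ν on X (i.e. μ minimizes the information ratio Δ(·)²/I(·)). Then Δ(μ) ≤ 2·Δ(x) for every x ∈ X; that is, Δ(μ) ≤ 2·min_{x∈X} Δ(x). -/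
open Finset

/-!
Move a fraction `t` of the mass of `μ` onto a single action `x`. Since `I ≥ 0`, optimality of `μ`
against this mixture gives `Δ(μ)² (1 - t) ≤ ((1 - t) Δ(μ) + t Δ(x))²` for all `t ∈ [0, 1]`.
The right-hand side minus the left is `t (2 Δ(μ) Δ(x) - Δ(μ)²) + O(t²)`, so the first-order
coefficient must be nonnegative, i.e. `Δ(μ) ≤ 2 Δ(x)`.
-/

theorem sum_mixture_single_mul {X R : Type*} [Fintype X] [DecidableEq X] [CommSemiring R]
    (μ f : X → R) (s t : R) (x : X) :
    ∑ y, (s * μ y + t * (Pi.single x 1 : X → R) y) * f y = s * ∑ y, μ y * f y + t * f x := by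
  simp only [add_mul, sum_add_distrib, mul_assoc, ← mul_sum, Pi.single_apply, ite_mul, one_mul,
    zero_mul, sum_ite_eq', mem_univ, if_true]

theorem le_two_mul_of_forall_sq_mul_one_sub_le {a b : ℝ} (hb : 0 ≤ b)
    (h : ∀ t ∈ Set.Icc (0 : ℝ) 1, a ^ 2 * (1 - t) ≤ ((1 - t) * a + t * b) ^ 2) :
    a ≤ 2 * b := by
  by_contra! hab
  have hgap : 0 < a * (a - 2 * b) := mul_pos (by linarith) (by linarith)
  have hd : 0 < 2 * (a - b) ^ 2 := by nlinarith
  -- this `t` makes the quadratic term cancel half of the (negative) linear term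
  set t := a * (a - 2 * b) / (2 * (a - b) ^ 2)
  have ht : t * (2 * (a - b) ^ 2) = a * (a - 2 * b) := div_mul_cancel₀ _ hd.ne'
  have ht0 : 0 < t := div_pos hgap hd
  have ht1 : t ≤ 1 := (div_le_one hd).2 (by nlinarith)
  have hexpand : ((1 - t) * a + t * b) ^ 2 - a ^ 2 * (1 - t)
      = t * (t * (a - b) ^ 2 - a * (a - 2 * b)) := by ring
  nlinarith [h t ⟨ht0.le, ht1⟩, mul_pos ht0 hgap]

theorem stmt5_general {X : Type*} [Fintype X] (Δ I : X → ℝ)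
    (hΔ : ∀ x, 0 ≤ Δ x) (hI : ∀ x, 0 ≤ I x)
    (μ : X → ℝ) (hμ0 : ∀ x, 0 ≤ μ x) (hμ1 : ∑ x, μ x = 1)
    (hIμ : 0 < ∑ x, μ x * I x)
    (hmin : ∀ ν : X → ℝ, (∀ x, 0 ≤ ν x) → (∑ x, ν x = 1) →
      (∑ x, μ x * Δ x) ^ 2 * (∑ x, ν x * I x) ≤
        (∑ x, ν x * Δ x) ^ 2 * (∑ x, μ x * I x)) :
    ∀ x : X, (∑ y, μ y * Δ y) ≤ 2 * Δ x := by
  classical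
  intro x
  refine le_two_mul_of_forall_sq_mul_one_sub_le (hΔ x) fun t ⟨ht0, ht1⟩ => ?_
  set ν : X → ℝ := fun y => (1 - t) * μ y + t * (Pi.single x 1 : X → ℝ) y
  have hν0 : ∀ y, 0 ≤ ν y := fun y => by
    have hδ : (0 : ℝ) ≤ (Pi.single x 1 : X → ℝ) y := by by_cases h : y = x <;> simp [h]
    exact add_nonneg (mul_nonneg (by linarith) (hμ0 y)) (mul_nonneg ht0 hδ)
  have hν1 : ∑ y, ν y = 1 := by
    simpa [hμ1] using sum_mixture_single_mul μ (fun _ => (1 : ℝ)) (1 - t) t x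
  have hopt := hmin ν hν0 hν1
  rw [sum_mixture_single_mul, sum_mixture_single_mul] at hopt
  refine le_of_mul_le_mul_right ?_ hIμ
  nlinarith [mul_nonneg (sq_nonneg (∑ y, μ y * Δ y)) (mul_nonneg ht0 (hI x))]

/-- **Lemma 4 of the paper.** If `Δ, I : X → ℝ` are nonnegative functions on a
finite nonempty set and `μ` is a probability distribution with `I(μ) > 0` that minimizes the
information ratio `Δ(·)²/I(·)`, then `Δ(μ) ≤ 2 Δ(x)` for every `x ∈ X`. -/
theorem stmt5 {X : Type*} [Fintype X] [Nonempty X] (Δ I : X → ℝ)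
    (hΔ : ∀ x, 0 ≤ Δ x) (hI : ∀ x, 0 ≤ I x)
    (μ : X → ℝ) (hμ0 : ∀ x, 0 ≤ μ x) (hμ1 : ∑ x, μ x = 1)
    (hIμ : 0 < ∑ x, μ x * I x)
    (hmin : ∀ ν : X → ℝ, (∀ x, 0 ≤ ν x) → (∑ x, ν x = 1) →
      (∑ x, μ x * Δ x) ^ 2 * (∑ x, ν x * I x) ≤
        (∑ x, ν x * Δ x) ^ 2 * (∑ x, μ x * I x)) :
    ∀ x : X, (∑ y, μ y * Δ y) ≤ 2 * Δ x :=
  stmt5_general Δ I hΔ hI μ hμ0 hμ1 hIμ hmin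
end

section
/- Let X ⊂ ℝ^d be a finite nonempty set, V ∈ ℝ^{d×d} symmetric positive definite, θ̂ ∈ ℝ^d, and β > 0. Let C = {θ ∈ ℝ^d : (θ−θ̂)ᵀ V (θ−θ̂) ≤ β} and let P(C) = {x ∈ X : there exists θ ∈ C with ⟨x,θ⟩ = max_{y∈X} ⟨y,θ⟩}. Then for every x ∈ X, max_{y∈X} (⟨y−x, θ̂⟩ + √β·‖y−x‖_{V^{-1}}) = max_{y∈P(C)} (⟨y−x, θ̂⟩ + √β·‖y−x‖_{V^{-1}}); that is, the maximum in the gap estimate is attained at a plausible maximizer. -/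
/-!
The gap function `u ↦ ⟨u, θ̂⟩ + √β ‖u‖_{V⁻¹}` is the support function of the confidence
ellipsoid `C`: by Cauchy–Schwarz for the inner product given by `V⁻¹` it bounds `⟨u, θ⟩` for every
`θ ∈ C`, with equality at `θ = θ̂ + (√β / ‖u‖_{V⁻¹}) V⁻¹ u`. If `z` maximises the gap of `y - x`
over `X` and `θ ∈ C` attains the gap of `z - x`, then
`⟨y - x, θ⟩ ≤ gap (y - x) ≤ gap (z - x) = ⟨z - x, θ⟩` for all `y ∈ X`, so `z` maximises `⟨·, θ⟩`
on `X`, i.e. `z ∈ P(C)`.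
-/

open Matrix Finset Classical

theorem Finset.sup'_eq_sup'_filter_of_isMax {α β : Type*} [LinearOrder β] {X : Finset α}
    (hX : X.Nonempty) {p : α → Prop} [DecidablePred p] (hp : (X.filter p).Nonempty) (F : α → β)
    (h : ∀ z ∈ X, (∀ y ∈ X, F y ≤ F z) → p z) :
    X.sup' hX F = (X.filter p).sup' hp F := by
  refine le_antisymm ?_ (sup'_mono F (filter_subset p X) hp)
  obtain ⟨z, hzX, hz⟩ := exists_mem_eq_sup' hX F
  rw [hz]
  exact le_sup' F (mem_filter.mpr ⟨hzX, h z hzX fun y hy => hz ▸ le_sup' F hy⟩)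

namespace Matrix

variable {n : Type*} [Fintype n]

theorem PosSemidef.dotProduct_mulVec_le_sqrt_mul_sqrt {M : Matrix n n ℝ} (hM : M.PosSemidef)
    (u v : n → ℝ) :
    u ⬝ᵥ (M *ᵥ v) ≤ √(u ⬝ᵥ (M *ᵥ u)) * √(v ⬝ᵥ (M *ᵥ v)) := by
  let := M.toSeminormedAddCommGroup hM
  let := M.toInnerProductSpace hM
  have h : (M *ᵥ v) ⬝ᵥ u ≤ √((M *ᵥ u) ⬝ᵥ u) * √((M *ᵥ v) ⬝ᵥ v) := real_inner_le_norm u v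
  simpa only [dotProduct_comm _ u, dotProduct_comm _ v] using h

variable [DecidableEq n] {V : Matrix n n ℝ} {θh : n → ℝ} {β : ℝ}

theorem PosDef.dotProduct_le_of_mem_ellipsoid (hV : V.PosDef) {θ : n → ℝ}
    (hθ : (θ - θh) ⬝ᵥ (V *ᵥ (θ - θh)) ≤ β) (u : n → ℝ) :
    u ⬝ᵥ θ ≤ u ⬝ᵥ θh + √β * √(u ⬝ᵥ (V⁻¹ *ᵥ u)) := by
  set δ := θ - θh
  have hVδ : V⁻¹ *ᵥ (V *ᵥ δ) = δ := by
    rw [mulVec_mulVec, nonsing_inv_mul _ (isUnit_iff_ne_zero.mpr hV.det_pos.ne'), one_mulVec]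
  have hCS := hV.inv.posSemidef.dotProduct_mulVec_le_sqrt_mul_sqrt u (V *ᵥ δ)
  rw [hVδ, dotProduct_comm (V *ᵥ δ)] at hCS
  calc u ⬝ᵥ θ = u ⬝ᵥ θh + u ⬝ᵥ δ := by rw [dotProduct_sub]; ring
    _ ≤ u ⬝ᵥ θh + √(u ⬝ᵥ (V⁻¹ *ᵥ u)) * √(δ ⬝ᵥ (V *ᵥ δ)) := by gcongr
    _ ≤ u ⬝ᵥ θh + √β * √(u ⬝ᵥ (V⁻¹ *ᵥ u)) := by
      rw [mul_comm]; gcongr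

theorem PosDef.exists_mem_ellipsoid_dotProduct_eq (hV : V.PosDef) (hβ : 0 ≤ β) (u : n → ℝ) :
    ∃ θ, (θ - θh) ⬝ᵥ (V *ᵥ (θ - θh)) ≤ β ∧
      u ⬝ᵥ θ = u ⬝ᵥ θh + √β * √(u ⬝ᵥ (V⁻¹ *ᵥ u)) := by
  set N := √(u ⬝ᵥ (V⁻¹ *ᵥ u))
  have hN : u ⬝ᵥ (V⁻¹ *ᵥ u) = N ^ 2 :=
    (Real.sq_sqrt (hV.inv.posSemidef.dotProduct_mulVec_nonneg u)).symm
  have hVV : V *ᵥ (V⁻¹ *ᵥ u) = u := by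
    rw [mulVec_mulVec, mul_nonsing_inv _ (isUnit_iff_ne_zero.mpr hV.det_pos.ne'), one_mulVec]
  -- When `N = 0` the junk value `√β / 0 = 0` makes the witness `θh` itself.
  refine ⟨θh + (√β / N) • (V⁻¹ *ᵥ u), ?_, ?_⟩
  · rw [add_sub_cancel_left, mulVec_smul, hVV, smul_dotProduct, dotProduct_smul,
      dotProduct_comm, hN, smul_eq_mul, smul_eq_mul]
    rcases eq_or_ne N 0 with h | h
    · simpa [h] using hβ
    · field_simp
      rw [Real.sq_sqrt hβ]
  · rw [dotProduct_add, dotProduct_smul, hN, smul_eq_mul]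
    rcases eq_or_ne N 0 with h | h
    · simp [h]
    · field_simp

theorem PosDef.exists_mem_ellipsoid_isMaxOn_dotProduct (hV : V.PosDef) (hβ : 0 ≤ β)
    {X : Set (n → ℝ)} {x z : n → ℝ}
    (hz : ∀ y ∈ X, (y - x) ⬝ᵥ θh + √β * √((y - x) ⬝ᵥ (V⁻¹ *ᵥ (y - x))) ≤
      (z - x) ⬝ᵥ θh + √β * √((z - x) ⬝ᵥ (V⁻¹ *ᵥ (z - x)))) :
    ∃ θ, (θ - θh) ⬝ᵥ (V *ᵥ (θ - θh)) ≤ β ∧ ∀ y ∈ X, y ⬝ᵥ θ ≤ z ⬝ᵥ θ := by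
  obtain ⟨θ, hθC, hθz⟩ := hV.exists_mem_ellipsoid_dotProduct_eq (θh := θh) hβ (z - x)
  refine ⟨θ, hθC, fun y hy => ?_⟩
  have h : (y - x) ⬝ᵥ θ ≤ (z - x) ⬝ᵥ θ :=
    (hV.dotProduct_le_of_mem_ellipsoid hθC (y - x)).trans (hθz ▸ hz y hy)
  simpa only [sub_dotProduct, sub_le_sub_iff_right] using h

end Matrix

theorem stmt6_general (d : ℕ) (X : Finset (Fin d → ℝ)) (hX : X.Nonempty)
    (V : Matrix (Fin d) (Fin d) ℝ) (hV : V.PosDef)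
    (θh : Fin d → ℝ) (β : ℝ) (hβ : 0 < β)
    (hP : (X.filter fun a => ∃ θ : Fin d → ℝ,
        (θ - θh) ⬝ᵥ (V *ᵥ (θ - θh)) ≤ β ∧ ∀ y ∈ X, y ⬝ᵥ θ ≤ a ⬝ᵥ θ).Nonempty)
    (x : Fin d → ℝ) :
    (X.sup' hX fun y =>
        (y - x) ⬝ᵥ θh + Real.sqrt β * Real.sqrt ((y - x) ⬝ᵥ (V⁻¹ *ᵥ (y - x)))) =
    ((X.filter fun a => ∃ θ : Fin d → ℝ,
        (θ - θh) ⬝ᵥ (V *ᵥ (θ - θh)) ≤ β ∧ ∀ y ∈ X, y ⬝ᵥ θ ≤ a ⬝ᵥ θ).sup' hP fun y =>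
        (y - x) ⬝ᵥ θh + Real.sqrt β * Real.sqrt ((y - x) ⬝ᵥ (V⁻¹ *ᵥ (y - x)))) :=
  Finset.sup'_eq_sup'_filter_of_isMax hX hP _ fun _ _ hz =>
    hV.exists_mem_ellipsoid_isMaxOn_dotProduct hβ.le (X := X) hz

/-- **gap maximisers lemma.** The maximum in the gap estimate
`Δ(x) = max_{y ∈ X} (⟨y - x, θ̂⟩ + √β ‖y - x‖_{V⁻¹})` is attained on the set of plausible
maximizers `P(C) = {a ∈ X : ∃ θ ∈ C, ⟨a, θ⟩ = max_{y ∈ X} ⟨y, θ⟩}`, where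
`C = {θ : (θ - θ̂)ᵀ V (θ - θ̂) ≤ β}` is the confidence ellipsoid. -/
theorem stmt6 (d : ℕ) (X : Finset (Fin d → ℝ)) (hX : X.Nonempty)
    (V : Matrix (Fin d) (Fin d) ℝ) (hV : V.PosDef)
    (θh : Fin d → ℝ) (β : ℝ) (hβ : 0 < β)
    (hP : (X.filter fun a => ∃ θ : Fin d → ℝ,
        (θ - θh) ⬝ᵥ (V *ᵥ (θ - θh)) ≤ β ∧ ∀ y ∈ X, y ⬝ᵥ θ ≤ a ⬝ᵥ θ).Nonempty)
    (x : Fin d → ℝ) (hx : x ∈ X) :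
    (X.sup' hX fun y =>
        (y - x) ⬝ᵥ θh + Real.sqrt β * Real.sqrt ((y - x) ⬝ᵥ (V⁻¹ *ᵥ (y - x)))) =
    ((X.filter fun a => ∃ θ : Fin d → ℝ,
        (θ - θh) ⬝ᵥ (V *ᵥ (θ - θh)) ≤ β ∧ ∀ y ∈ X, y ⬝ᵥ θ ≤ a ⬝ᵥ θ).sup' hP fun y =>
        (y - x) ⬝ᵥ θh + Real.sqrt β * Real.sqrt ((y - x) ⬝ᵥ (V⁻¹ *ᵥ (y - x)))) :=
  stmt6_general d X hX V hV θh β hβ hP x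
end

section
/- Let X ⊂ ℝ^d be a finite nonempty set, V ∈ ℝ^{d×d} symmetric positive definite, θ̂ ∈ ℝ^d, and β > 0. Let C = {θ ∈ ℝ^d : (θ−θ̂)ᵀ V (θ−θ̂) ≤ β} and P(C) = {x ∈ X : there exists θ ∈ C with ⟨x,θ⟩ = max_{y∈X} ⟨y,θ⟩}. Then for every x ∈ P(C), the gap estimate satisfies max_{y∈X} (⟨y−x, θ̂⟩ + √β·‖y−x‖_{V^{-1}}) ≤ 2·√β·max_{y∈P(C)} ‖y−x‖_{V^{-1}}. -/
/-!
Let `y` maximise the gap estimate `g(y) = ⟨y - x, θ̂⟩ + √β ‖y - x‖_{V⁻¹}` over `X`. The estimate is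
the support function of the ellipsoid `C` in direction `y - x`, attained at
`θ = θ̂ + (√β / ‖y - x‖_{V⁻¹}) V⁻¹ (y - x)`; since `⟨z - x, θ⟩ ≤ g(z) ≤ g(y) = ⟨y - x, θ⟩` for all
`z ∈ X`, the point `y` maximises `⟨·, θ⟩`, so `y ∈ P(C)`. On the other hand `x` maximises `⟨·, θₓ⟩`
for some `θₓ ∈ C`, and `θ̂` lies in the ellipsoid of the same shape centred at `θₓ`, so
`⟨y - x, θ̂⟩ ≤ ⟨y - x, θₓ⟩ + √β ‖y - x‖_{V⁻¹} ≤ √β ‖y - x‖_{V⁻¹}`.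
-/

open Matrix Finset

variable {ι : Type*} [Fintype ι]

def ellipsoid (V : Matrix ι ι ℝ) (c : ι → ℝ) (β : ℝ) : Set (ι → ℝ) :=
  {θ | (θ - c) ⬝ᵥ (V *ᵥ (θ - c)) ≤ β}

theorem mem_ellipsoid_comm {V : Matrix ι ι ℝ} {c θ : ι → ℝ} {β : ℝ} :
    θ ∈ ellipsoid V c β ↔ c ∈ ellipsoid V θ β := by
  simp only [ellipsoid, Set.mem_ofPred_eq, ← neg_sub θ c, mulVec_neg, dotProduct_neg,
    neg_dotProduct, neg_neg]

variable [DecidableEq ι]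

theorem Matrix.PosSemidef.dotProduct_mulVec_le_sqrt_mul_sqrt_s7 {A : Matrix ι ι ℝ}
    (hA : A.PosSemidef) (a b : ι → ℝ) :
    a ⬝ᵥ (A *ᵥ b) ≤ √(a ⬝ᵥ (A *ᵥ a)) * √(b ⬝ᵥ (A *ᵥ b)) := by
  have hsymm : b ⬝ᵥ (A *ᵥ a) = a ⬝ᵥ (A *ᵥ b) := by
    rw [dotProduct_mulVec, ← mulVec_transpose, dotProduct_comm,
      ← conjTranspose_eq_transpose_of_trivial, hA.isHermitian.eq]
  have hcs := LinearMap.BilinForm.apply_mul_apply_le_of_forall_zero_le (toLinearMap₂' ℝ A)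
    (fun v => by simpa [toLinearMap₂'_apply'] using hA.dotProduct_mulVec_nonneg v) a b
  simp only [toLinearMap₂'_apply', hsymm] at hcs
  rw [← Real.sqrt_mul (by simpa using hA.dotProduct_mulVec_nonneg a)]
  exact Real.le_sqrt_of_sq_le (by rwa [sq])

theorem Matrix.PosDef.dotProduct_le_sqrt_inv_mul_sqrt {V : Matrix ι ι ℝ} (hV : V.PosDef)
    (w u : ι → ℝ) : w ⬝ᵥ u ≤ √(w ⬝ᵥ (V⁻¹ *ᵥ w)) * √(u ⬝ᵥ (V *ᵥ u)) := by
  have hu : V⁻¹ *ᵥ (V *ᵥ u) = u := by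
    rw [mulVec_mulVec, nonsing_inv_mul V ((isUnit_iff_isUnit_det V).mp hV.isUnit), one_mulVec]
  simpa [hu, dotProduct_comm u] using
    hV.inv.posSemidef.dotProduct_mulVec_le_sqrt_mul_sqrt_s7 w (V *ᵥ u)

theorem dotProduct_le_of_mem_ellipsoid {V : Matrix ι ι ℝ} (hV : V.PosDef) {c θ : ι → ℝ} {β : ℝ}
    (hθ : θ ∈ ellipsoid V c β) (w : ι → ℝ) :
    w ⬝ᵥ θ ≤ w ⬝ᵥ c + √β * √(w ⬝ᵥ (V⁻¹ *ᵥ w)) := by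
  have h := hV.dotProduct_le_sqrt_inv_mul_sqrt w (θ - c)
  rw [dotProduct_sub] at h
  nlinarith [Real.sqrt_le_sqrt hθ, Real.sqrt_nonneg (w ⬝ᵥ (V⁻¹ *ᵥ w))]

theorem exists_mem_ellipsoid_dotProduct_eq {V : Matrix ι ι ℝ} (hV : V.PosDef) (c : ι → ℝ)
    {β : ℝ} (hβ : 0 ≤ β) (w : ι → ℝ) :
    ∃ θ ∈ ellipsoid V c β, w ⬝ᵥ θ = w ⬝ᵥ c + √β * √(w ⬝ᵥ (V⁻¹ *ᵥ w)) := by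
  set n := √(w ⬝ᵥ (V⁻¹ *ᵥ w))
  have hn : w ⬝ᵥ (V⁻¹ *ᵥ w) = n ^ 2 :=
    (Real.sq_sqrt (by simpa using hV.inv.posSemidef.dotProduct_mulVec_nonneg w)).symm
  have hVV : V *ᵥ (V⁻¹ *ᵥ w) = w := by
    rw [mulVec_mulVec, mul_nonsing_inv V ((isUnit_iff_isUnit_det V).mp hV.isUnit), one_mulVec]
  -- for `n = 0` the junk value `√β / 0 = 0` makes the witness `c` itself
  refine ⟨c + (√β / n) • (V⁻¹ *ᵥ w), ?_, ?_⟩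
  · change (c + _ - c) ⬝ᵥ (V *ᵥ (c + _ - c)) ≤ β
    rw [add_sub_cancel_left, mulVec_smul, hVV, smul_dotProduct, dotProduct_smul,
      dotProduct_comm, hn, smul_eq_mul, smul_eq_mul, ← mul_assoc, ← sq]
    rcases eq_or_ne n 0 with h0 | h0
    · simp [h0, hβ]
    · rw [div_pow, Real.sq_sqrt hβ, div_mul_cancel₀ _ (pow_ne_zero 2 h0)]
  · rcases eq_or_ne n 0 with h0 | h0
    · simp [h0]
    · rw [dotProduct_add, dotProduct_smul, hn, smul_eq_mul]
      field_simp

open Classical in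
/-- For every plausible maximizer `x ∈ P(C)` (with
`C = {θ : (θ - θ̂)ᵀ V (θ - θ̂) ≤ β}` the confidence ellipsoid), the gap estimate satisfies
`max_{y ∈ X} (⟨y - x, θ̂⟩ + √β ‖y - x‖_{V⁻¹}) ≤ 2 √β max_{y ∈ P(C)} ‖y - x‖_{V⁻¹}`. -/
theorem stmt7 (d : ℕ) (X : Finset (Fin d → ℝ)) (hX : X.Nonempty)
    (V : Matrix (Fin d) (Fin d) ℝ) (hV : V.PosDef)
    (θh : Fin d → ℝ) (β : ℝ) (hβ : 0 < β)
    (hP : (X.filter fun a => ∃ θ : Fin d → ℝ,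
        (θ - θh) ⬝ᵥ (V *ᵥ (θ - θh)) ≤ β ∧ ∀ y ∈ X, y ⬝ᵥ θ ≤ a ⬝ᵥ θ).Nonempty)
    (x : Fin d → ℝ)
    (hx : x ∈ X.filter fun a => ∃ θ : Fin d → ℝ,
        (θ - θh) ⬝ᵥ (V *ᵥ (θ - θh)) ≤ β ∧ ∀ y ∈ X, y ⬝ᵥ θ ≤ a ⬝ᵥ θ) :
    (X.sup' hX fun y =>
        (y - x) ⬝ᵥ θh + Real.sqrt β * Real.sqrt ((y - x) ⬝ᵥ (V⁻¹ *ᵥ (y - x)))) ≤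
      2 * Real.sqrt β *
        ((X.filter fun a => ∃ θ : Fin d → ℝ,
            (θ - θh) ⬝ᵥ (V *ᵥ (θ - θh)) ≤ β ∧ ∀ y ∈ X, y ⬝ᵥ θ ≤ a ⬝ᵥ θ).sup' hP fun y =>
          Real.sqrt ((y - x) ⬝ᵥ (V⁻¹ *ᵥ (y - x)))) := by
  obtain ⟨-, θx, hθx, hx_max⟩ := mem_filter.mp hx
  obtain ⟨y, hyX, hy⟩ := X.exists_mem_eq_sup' hX fun y =>
    (y - x) ⬝ᵥ θh + √β * √((y - x) ⬝ᵥ (V⁻¹ *ᵥ (y - x)))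
  rw [hy]
  obtain ⟨θy, hθy, hθy_eq⟩ := exists_mem_ellipsoid_dotProduct_eq hV θh hβ.le (y - x)
  have hy_max : ∀ z ∈ X, z ⬝ᵥ θy ≤ y ⬝ᵥ θy := fun z hz => by
    have := (dotProduct_le_of_mem_ellipsoid hV hθy (z - x)).trans (hy ▸ le_sup' _ hz)
    rw [← hθy_eq, sub_dotProduct, sub_dotProduct] at this
    linarith
  have hθh := dotProduct_le_of_mem_ellipsoid hV (mem_ellipsoid_comm.mp hθx) (y - x)
  have hθx_le : (y - x) ⬝ᵥ θx ≤ 0 := by rw [sub_dotProduct]; linarith [hx_max y hyX]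
  calc (y - x) ⬝ᵥ θh + √β * √((y - x) ⬝ᵥ (V⁻¹ *ᵥ (y - x)))
      ≤ 2 * √β * √((y - x) ⬝ᵥ (V⁻¹ *ᵥ (y - x))) := by linarith
    _ ≤ _ := by
      gcongr
      apply le_sup' (fun y => √((y - x) ⬝ᵥ (V⁻¹ *ᵥ (y - x))))
      exact mem_filter.mpr ⟨hyX, θy, hθy, hy_max⟩
end

section
/- Let Y be a finite nonempty index set, and for each z ∈ Y let A_z ∈ ℝ^{d×m} be a matrix with ‖A_z‖₂ ≤ 1. Let V ∈ ℝ^{d×d} be symmetric with V ⪰ I_d, let w ∈ ℝ^d be nonzero, and suppose α > 0 is such that for every v ∈ ℝ^d there exists z ∈ Y with ⟨w, v⟩² ≤ α·‖A_zᵀ v‖². Then wᵀ V^{-1} w ≤ 2·α·max_{z∈Y} log((wᵀ V^{-1} w)/(wᵀ (V + A_z A_zᵀ)^{-1} w)). -/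
/-!
Take the direction `y = V⁻¹ w` and let `z` be an action aligned with it, so that
`s² ≤ α ‖A_zᵀ y‖²` for `s = wᵀ V⁻¹ w`. With `x = (V + A_z A_zᵀ)⁻¹ w` and `t = wᵀ x`, expanding
quadratic forms gives `s - t = (x - y)ᵀ V (x - y) + ‖A_zᵀ x‖²`. Since `V ⪰ I` and `‖A_zᵀ‖ ≤ 1`, the
first term is at least `‖A_zᵀ (x - y)‖²`, and the parallelogram inequality yields
`s - t ≥ ‖A_zᵀ y‖² / 2 ≥ s² / (2α)`. Hence `log (s / t) ≥ 1 - t / s ≥ s / (2α)`.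
-/

open Matrix

section

variable {n k : Type*} [Fintype n] [Fintype k]

lemma dotProduct_self_nonneg_real (v : n → ℝ) : 0 ≤ v ⬝ᵥ v := by
  simpa using dotProduct_star_self_nonneg v

lemma dotProduct_sub_self_le (a b : n → ℝ) :
    (a - b) ⬝ᵥ (a - b) ≤ 2 * (a ⬝ᵥ a) + 2 * (b ⬝ᵥ b) := by
  have := dotProduct_self_nonneg_real (a + b)
  simp only [dotProduct_sub, sub_dotProduct, dotProduct_add, add_dotProduct,
    dotProduct_comm b a] at this ⊢
  linarith

lemma Matrix.PosSemidef.dotProduct_mulVec_nonneg_real {M : Matrix n n ℝ} (hM : M.PosSemidef)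
    (x : n → ℝ) : 0 ≤ x ⬝ᵥ (M *ᵥ x) := by
  simpa using hM.dotProduct_mulVec_nonneg x

lemma dotProduct_le_dotProduct_mulVec_of_posSemidef_sub_one [DecidableEq n]
    {V : Matrix n n ℝ} (hV : (V - 1).PosSemidef) (e : n → ℝ) : e ⬝ᵥ e ≤ e ⬝ᵥ (V *ᵥ e) := by
  have := hV.dotProduct_mulVec_nonneg_real e
  rwa [sub_mulVec, one_mulVec, dotProduct_sub, sub_nonneg] at this

lemma dotProduct_transpose_mul_mulVec (A : Matrix k n ℝ) (x : n → ℝ) :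
    x ⬝ᵥ ((Aᵀ * A) *ᵥ x) = (A *ᵥ x) ⬝ᵥ (A *ᵥ x) := by
  rw [← mulVec_mulVec, dotProduct_transpose_mulVec]

lemma dotProduct_transpose_mulVec_self_le [DecidableEq n] {A : Matrix k n ℝ}
    (hA : (1 - Aᵀ * A).PosSemidef) (e : k → ℝ) :
    (Aᵀ *ᵥ e) ⬝ᵥ (Aᵀ *ᵥ e) ≤ e ⬝ᵥ e := by
  set a := Aᵀ *ᵥ e
  have hcontr : (A *ᵥ a) ⬝ᵥ (A *ᵥ a) ≤ a ⬝ᵥ a := by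
    have := hA.dotProduct_mulVec_nonneg_real a
    rwa [sub_mulVec, one_mulVec, dotProduct_sub, dotProduct_transpose_mul_mulVec,
      sub_nonneg] at this
  have hcross : e ⬝ᵥ (A *ᵥ a) = a ⬝ᵥ a := by
    rw [← dotProduct_transpose_mulVec]
  have hsq := dotProduct_self_nonneg_real (e - A *ᵥ a)
  simp only [dotProduct_sub, sub_dotProduct, dotProduct_comm (A *ᵥ a) e, hcross] at hsq
  linarith

lemma mulVec_inv_mulVec [DecidableEq n] {M : Matrix n n ℝ} (hM : IsUnit M.det) (w : n → ℝ) :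
    M *ᵥ (M⁻¹ *ᵥ w) = w := by
  rw [mulVec_mulVec, mul_nonsing_inv M hM, one_mulVec]

lemma dotProduct_add_mul_transpose_inv_mulVec_le [DecidableEq n] {V : Matrix n n ℝ}
    (hV : V.PosDef) {A : Matrix n k ℝ}
    (hA : ∀ e, (Aᵀ *ᵥ e) ⬝ᵥ (Aᵀ *ᵥ e) ≤ e ⬝ᵥ (V *ᵥ e)) (w : n → ℝ) :
    w ⬝ᵥ ((V + A * Aᵀ)⁻¹ *ᵥ w) ≤
      w ⬝ᵥ (V⁻¹ *ᵥ w) - (Aᵀ *ᵥ (V⁻¹ *ᵥ w)) ⬝ᵥ (Aᵀ *ᵥ (V⁻¹ *ᵥ w)) / 2 := by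
  set W := V + A * Aᵀ
  have hW : W.PosDef := hV.add_posSemidef (by simpa using posSemidef_self_mul_conjTranspose A)
  set y := V⁻¹ *ᵥ w
  set x := W⁻¹ *ᵥ w
  have hy : V *ᵥ y = w := mulVec_inv_mulVec ((isUnit_iff_isUnit_det V).mp hV.isUnit) w
  have hx : W *ᵥ x = w := mulVec_inv_mulVec ((isUnit_iff_isUnit_det W).mp hW.isUnit) w
  have hVt : Vᵀ = V := by simpa using hV.isHermitian.eq
  have hsymm : ∀ a b : n → ℝ, a ⬝ᵥ (V *ᵥ b) = b ⬝ᵥ (V *ᵥ a) := fun a b => by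
    rw [← dotProduct_transpose_mulVec, hVt]
  have ht : w ⬝ᵥ x = x ⬝ᵥ (V *ᵥ x) + (Aᵀ *ᵥ x) ⬝ᵥ (Aᵀ *ᵥ x) := by
    rw [← hx, dotProduct_comm, add_mulVec, dotProduct_add, ← mulVec_mulVec,
      ← dotProduct_transpose_mulVec A]
  have hts : w ⬝ᵥ x = y ⬝ᵥ (V *ᵥ x) := by rw [← hy, hsymm, dotProduct_comm]
  have hs : w ⬝ᵥ y = y ⬝ᵥ (V *ᵥ y) := by rw [← hy, dotProduct_comm]
  have hexcess := hA (x - y)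
  have hpar := dotProduct_sub_self_le (Aᵀ *ᵥ x) (Aᵀ *ᵥ (x - y))
  simp only [mulVec_sub, dotProduct_sub, sub_dotProduct, sub_sub_cancel] at hexcess hpar
  rw [hsymm x y] at hexcess
  linarith

end

lemma le_two_mul_mul_log_div {s t q α : ℝ} (hs : 0 < s) (ht : 0 < t) (hα : 0 < α)
    (hsq : s ^ 2 ≤ α * q) (htq : t ≤ s - q / 2) : s ≤ 2 * α * Real.log (s / t) := by
  have hlog : 1 - t / s ≤ Real.log (s / t) := by
    simpa using Real.one_sub_inv_le_log_of_pos (div_pos hs ht)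
  have hgain : s / (2 * α) ≤ 1 - t / s := by
    rw [one_sub_div hs.ne', le_div_iff₀ hs, div_mul_eq_mul_div, div_le_iff₀ (by positivity)]
    nlinarith
  calc s = 2 * α * (s / (2 * α)) := by field_simp
    _ ≤ 2 * α * Real.log (s / t) := by gcongr; linarith

theorem stmt10_general {ι : Type*} (d m : ℕ) (Y : Finset ι) (hY : Y.Nonempty)
    (A : ι → Matrix (Fin d) (Fin m) ℝ)
    (hA : ∀ z ∈ Y, ((1 : Matrix (Fin m) (Fin m) ℝ) - (A z)ᵀ * A z).PosSemidef)
    (V : Matrix (Fin d) (Fin d) ℝ)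
    (hVI : (V - (1 : Matrix (Fin d) (Fin d) ℝ)).PosSemidef)
    (w : Fin d → ℝ) (hw : w ≠ 0) (α : ℝ) (hα : 0 < α)
    (halign : ∀ v : Fin d → ℝ, ∃ z ∈ Y,
      (w ⬝ᵥ v) ^ 2 ≤ α * (((A z)ᵀ *ᵥ v) ⬝ᵥ ((A z)ᵀ *ᵥ v))) :
    w ⬝ᵥ (V⁻¹ *ᵥ w) ≤
      2 * α * Y.sup' hY fun z =>
        Real.log ((w ⬝ᵥ (V⁻¹ *ᵥ w)) / (w ⬝ᵥ ((V + A z * (A z)ᵀ)⁻¹ *ᵥ w))) := by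
  have hV : V.PosDef := by simpa using PosDef.posSemidef_add hVI PosDef.one
  obtain ⟨z, hz, hzalign⟩ := halign (V⁻¹ *ᵥ w)
  have hAz : ∀ e, ((A z)ᵀ *ᵥ e) ⬝ᵥ ((A z)ᵀ *ᵥ e) ≤ e ⬝ᵥ (V *ᵥ e) := fun e =>
    (dotProduct_transpose_mulVec_self_le (hA z hz) e).trans
      (dotProduct_le_dotProduct_mulVec_of_posSemidef_sub_one hVI e)
  have hW : (V + A z * (A z)ᵀ).PosDef :=
    hV.add_posSemidef (by simpa using posSemidef_self_mul_conjTranspose (A z))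
  have hs : 0 < w ⬝ᵥ (V⁻¹ *ᵥ w) := by simpa using hV.inv.dotProduct_mulVec_pos hw
  have ht : 0 < w ⬝ᵥ ((V + A z * (A z)ᵀ)⁻¹ *ᵥ w) := by
    simpa using hW.inv.dotProduct_mulVec_pos hw
  set gain : ι → ℝ := fun z =>
    Real.log ((w ⬝ᵥ (V⁻¹ *ᵥ w)) / (w ⬝ᵥ ((V + A z * (A z)ᵀ)⁻¹ *ᵥ w)))
  calc w ⬝ᵥ (V⁻¹ *ᵥ w)
      ≤ 2 * α * gain z :=
        le_two_mul_mul_log_div hs ht hα hzalign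
          (dotProduct_add_mul_transpose_inv_mulVec_le hV hAz w)
    _ ≤ 2 * α * Y.sup' hY gain := by gcongr; exact Finset.le_sup' gain hz

/-- **Lemma lem:explore-direction.** Let `Y` be a finite nonempty index set of
actions with observation matrices `A_z` of operator norm at most `1` (encoded as
`A_zᵀ A_z ⪯ I_m`), let `V ⪰ I_d` be symmetric, `w ≠ 0`, and suppose `α > 0` is such that
for every `v` there is `z ∈ Y` with `⟨w, v⟩² ≤ α ‖A_zᵀ v‖²`. Then
`wᵀ V⁻¹ w ≤ 2 α max_{z ∈ Y} log ((wᵀ V⁻¹ w) / (wᵀ (V + A_z A_zᵀ)⁻¹ w))`. -/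
theorem stmt10 {ι : Type*} (d m : ℕ) (Y : Finset ι) (hY : Y.Nonempty)
    (A : ι → Matrix (Fin d) (Fin m) ℝ)
    (hA : ∀ z ∈ Y, ((1 : Matrix (Fin m) (Fin m) ℝ) - (A z)ᵀ * A z).PosSemidef)
    (V : Matrix (Fin d) (Fin d) ℝ) (hVsymm : V.IsHermitian)
    (hVI : (V - (1 : Matrix (Fin d) (Fin d) ℝ)).PosSemidef)
    (w : Fin d → ℝ) (hw : w ≠ 0) (α : ℝ) (hα : 0 < α)
    (halign : ∀ v : Fin d → ℝ, ∃ z ∈ Y,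
      (w ⬝ᵥ v) ^ 2 ≤ α * (((A z)ᵀ *ᵥ v) ⬝ᵥ ((A z)ᵀ *ᵥ v))) :
    w ⬝ᵥ (V⁻¹ *ᵥ w) ≤
      2 * α * Y.sup' hY fun z =>
        Real.log ((w ⬝ᵥ (V⁻¹ *ᵥ w)) / (w ⬝ᵥ ((V + A z * (A z)ᵀ)⁻¹ *ᵥ w))) :=
  stmt10_general d m Y hY A hA V hVI w hw α hα halign
end

section
/- Let Z be a finite set and for each z ∈ Z let A_z ∈ ℝ^{d×m} be a matrix. Suppose B ∈ ℝ^{d×d} is invertible and each column of B is a column of A_{z} for some z ∈ Z (i.e. for every j ∈ {1,…,d} there exist z_j ∈ Z and a column index k_j with B e_j = A_{z_j} e_{k_j}). Then for every u ∈ ℝ^d with ‖u‖ ≤ 1 and every v ∈ ℝ^d, ⟨u, v⟩² · λ_min(B Bᵀ) ≤ d · max_{z∈Z} ‖A_zᵀ v‖². -/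
/-!
Every column of `B` is a column of some `A_z`, so each coordinate of `Bᵀ v` is a coordinate of
some `A_zᵀ v`; summing over the `d` columns gives `‖Bᵀ v‖² ≤ d · max_z ‖A_zᵀ v‖²`. On the other
side, `‖Bᵀ v‖² = vᵀ (B Bᵀ) v ≥ λ_min(B Bᵀ) ‖v‖²` by the Rayleigh bound, and
`⟨u, v⟩² ≤ ‖v‖²` by Cauchy–Schwarz since `‖u‖ ≤ 1`; `λ_min(B Bᵀ) ≥ 0` lets the two combine.
-/

open Matrix Finset

namespace Matrix

variable {n : Type*} [Fintype n]

theorem sq_apply_le_dotProduct_self (w : n → ℝ) (k : n) : w k ^ 2 ≤ w ⬝ᵥ w := by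
  simpa only [dotProduct, sq] using
    single_le_sum (f := fun i => w i * w i) (fun i _ => mul_self_nonneg (w i)) (mem_univ k)

theorem dotProduct_sq_le_dotProduct_self {u : n → ℝ} (hu : u ⬝ᵥ u ≤ 1) (v : n → ℝ) :
    (u ⬝ᵥ v) ^ 2 ≤ v ⬝ᵥ v := by
  calc (u ⬝ᵥ v) ^ 2 ≤ (u ⬝ᵥ u) * (v ⬝ᵥ v) := by
        simpa only [dotProduct, sq] using sum_mul_sq_le_sq_mul_sq univ u v
    _ ≤ v ⬝ᵥ v := mul_le_of_le_one_left (dotProduct_self_star_nonneg v) hu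

theorem dotProduct_mul_transpose_mulVec {m : Type*} [Fintype m] (B : Matrix n m ℝ)
    (v : n → ℝ) : v ⬝ᵥ (B * Bᵀ) *ᵥ v = (Bᵀ *ᵥ v) ⬝ᵥ (Bᵀ *ᵥ v) := by
  rw [← mulVec_mulVec, dotProduct_mulVec, ← mulVec_transpose]

theorem dotProduct_self_transpose_mulVec_le_card_mul_sup' {ι m l : Type*} [Fintype m]
    [Fintype l] {Z : Finset ι} (hZ : Z.Nonempty) (A : ι → Matrix n l ℝ) (B : Matrix n m ℝ)
    (hcols : ∀ j, ∃ z ∈ Z, ∃ k, ∀ i, B i j = A z i k) (v : n → ℝ) :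
    (Bᵀ *ᵥ v) ⬝ᵥ (Bᵀ *ᵥ v) ≤
      Fintype.card m * Z.sup' hZ (fun z => ((A z)ᵀ *ᵥ v) ⬝ᵥ ((A z)ᵀ *ᵥ v)) := by
  set S := Z.sup' hZ (fun z => ((A z)ᵀ *ᵥ v) ⬝ᵥ ((A z)ᵀ *ᵥ v))
  have hcoord (j : m) : (Bᵀ *ᵥ v) j ^ 2 ≤ S := by
    obtain ⟨z, hz, k, hk⟩ := hcols j
    have hjk : (Bᵀ *ᵥ v) j = ((A z)ᵀ *ᵥ v) k := by
      simp only [mulVec, dotProduct, transpose_apply, hk]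
    rw [hjk]
    exact (sq_apply_le_dotProduct_self _ k).trans
      (le_sup' (fun z => ((A z)ᵀ *ᵥ v) ⬝ᵥ ((A z)ᵀ *ᵥ v)) hz)
  calc (Bᵀ *ᵥ v) ⬝ᵥ (Bᵀ *ᵥ v)
      = ∑ j, (Bᵀ *ᵥ v) j ^ 2 := by simp only [dotProduct, sq]
    _ ≤ ∑ _j : m, S := sum_le_sum fun j _ => hcoord j
    _ = Fintype.card m * S := by rw [sum_const, card_univ, nsmul_eq_mul]

variable [DecidableEq n]

theorem IsHermitian.dotProduct_mulVec_eq_sum_eigenvalues {M : Matrix n n ℝ} (hM : M.IsHermitian)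
    (v : n → ℝ) :
    v ⬝ᵥ M *ᵥ v =
      ∑ i, hM.eigenvalues i * (star (hM.eigenvectorUnitary : Matrix n n ℝ) *ᵥ v) i ^ 2 := by
  set U : Matrix n n ℝ := (hM.eigenvectorUnitary : Matrix n n ℝ)
  have hstar : star U = Uᵀ := rfl
  conv_lhs => rw [hM.spectral_theorem, Unitary.conjStarAlgAut_apply]
  rw [← mulVec_mulVec, ← mulVec_mulVec, dotProduct_mulVec, ← mulVec_transpose, ← hstar]
  simp only [dotProduct, mulVec_diagonal, RCLike.ofReal_real_eq_id, CompTriple.comp_eq, sq]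
  exact sum_congr rfl fun i _ => by ring

theorem dotProduct_self_star_mulVec_of_mem_unitaryGroup {U : Matrix n n ℝ}
    (hU : U ∈ unitaryGroup n ℝ) (v : n → ℝ) :
    (star U *ᵥ v) ⬝ᵥ (star U *ᵥ v) = v ⬝ᵥ v := by
  have hstar : star U = Uᵀ := rfl
  rw [dotProduct_comm, dotProduct_mulVec, hstar, vecMul_transpose, mulVec_mulVec, ← hstar,
    mem_unitaryGroup_iff.mp hU, one_mulVec]

theorem IsHermitian.iInf_eigenvalues_mul_dotProduct_self_le {M : Matrix n n ℝ}
    (hM : M.IsHermitian) (v : n → ℝ) :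
    (⨅ i, hM.eigenvalues i) * (v ⬝ᵥ v) ≤ v ⬝ᵥ M *ᵥ v := by
  rw [hM.dotProduct_mulVec_eq_sum_eigenvalues,
    ← dotProduct_self_star_mulVec_of_mem_unitaryGroup hM.eigenvectorUnitary.2 v, dotProduct,
    mul_sum]
  refine sum_le_sum fun i _ => ?_
  rw [← sq]
  exact mul_le_mul_of_nonneg_right (ciInf_le (Set.finite_range _).bddBelow i) (sq_nonneg _)

end Matrix

theorem stmt13_general {ι : Type*} (d m : ℕ) (Z : Finset ι) (hZ : Z.Nonempty)
    (A : ι → Matrix (Fin d) (Fin m) ℝ)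
    (B : Matrix (Fin d) (Fin d) ℝ)
    (hcols : ∀ j : Fin d, ∃ z ∈ Z, ∃ k : Fin m, ∀ i : Fin d, B i j = A z i k)
    (hH : (B * Bᵀ).IsHermitian)
    (u v : Fin d → ℝ) (hu : Real.sqrt (u ⬝ᵥ u) ≤ 1) :
    (u ⬝ᵥ v) ^ 2 * (⨅ i, hH.eigenvalues i) ≤
      (d : ℝ) * Z.sup' hZ (fun z => ((A z)ᵀ *ᵥ v) ⬝ᵥ ((A z)ᵀ *ᵥ v)) := by
  have hlam : 0 ≤ ⨅ i, hH.eigenvalues i :=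
    Real.iInf_nonneg (eigenvalues_self_mul_conjTranspose_nonneg B)
  have hcs : (u ⬝ᵥ v) ^ 2 ≤ v ⬝ᵥ v := dotProduct_sq_le_dotProduct_self (Real.sqrt_le_one.mp hu) v
  calc (u ⬝ᵥ v) ^ 2 * (⨅ i, hH.eigenvalues i)
      ≤ (v ⬝ᵥ v) * (⨅ i, hH.eigenvalues i) := mul_le_mul_of_nonneg_right hcs hlam
    _ = (⨅ i, hH.eigenvalues i) * (v ⬝ᵥ v) := mul_comm _ _
    _ ≤ v ⬝ᵥ (B * Bᵀ) *ᵥ v := hH.iInf_eigenvalues_mul_dotProduct_self_le v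
    _ = (Bᵀ *ᵥ v) ⬝ᵥ (Bᵀ *ᵥ v) := dotProduct_mul_transpose_mulVec B v
    _ ≤ _ := by
      simpa only [Fintype.card_fin] using
        dotProduct_self_transpose_mulVec_le_card_mul_sup' hZ A B hcols v

/-- Let `B` be an invertible `d × d` matrix each of whose columns is a
column of some `A_z`, `z ∈ Z`. Then for every `u` with `‖u‖ ≤ 1` and every `v`,
`⟨u, v⟩² * λ_min(B Bᵀ) ≤ d * max_{z ∈ Z} ‖A_zᵀ v‖²`. -/
theorem stmt13 {ι : Type*} (d m : ℕ) (Z : Finset ι) (hZ : Z.Nonempty)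
    (A : ι → Matrix (Fin d) (Fin m) ℝ)
    (B : Matrix (Fin d) (Fin d) ℝ) (hB : IsUnit B.det)
    (hcols : ∀ j : Fin d, ∃ z ∈ Z, ∃ k : Fin m, ∀ i : Fin d, B i j = A z i k)
    (hH : (B * Bᵀ).IsHermitian)
    (u v : Fin d → ℝ) (hu : Real.sqrt (u ⬝ᵥ u) ≤ 1) :
    (u ⬝ᵥ v) ^ 2 * (⨅ i, hH.eigenvalues i) ≤
      (d : ℝ) * Z.sup' hZ (fun z => ((A z)ᵀ *ᵥ v) ⬝ᵥ ((A z)ᵀ *ᵥ v)) :=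
  stmt13_general d m Z hZ A B hcols hH u v hu
end

section
/- Let X ⊂ ℝ^d be a finite set and for each x ∈ X let A_x ∈ ℝ^{d×m} be a matrix. Let L = span of the union of the columns of all A_z, z ∈ X, and D = span{x − y : x, y ∈ X}. Then the following are equivalent: (i) for all x, y ∈ X, x − y ∈ L; (ii) for all x, y that are extreme points of the convex hull of X, x − y ∈ L; (iii) there exists a subset Y ⊆ X such that the span of the columns of the matrices A_x, x ∈ Y, contains D. -/
/-!
Each condition says that the direction `vectorSpan ℝ X` of the affine hull of `X` lies in a
column span. For (iii) this is because column spans are monotone in the set of actions, so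
`Y = X` is the best choice. For (ii), a finite set and the extreme points of its convex hull
have the same convex hull (Krein–Milman), hence the same affine span.
-/

open Matrix

/-- The span of all columns of the observation matrices `A x` for `x` in a set `S`. -/
def colSpan (d m : ℕ) (A : (Fin d → ℝ) → Matrix (Fin d) (Fin m) ℝ)
    (S : Set (Fin d → ℝ)) : Submodule ℝ (Fin d → ℝ) :=
  Submodule.span ℝ {c | ∃ x ∈ S, ∃ j : Fin m, c = (A x)ᵀ j}

theorem vectorSpan_le_iff_sub_mem {k V : Type*} [Ring k] [AddCommGroup V] [Module k V]
    {s : Set V} {L : Submodule k V} :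
    vectorSpan k s ≤ L ↔ ∀ x ∈ s, ∀ y ∈ s, x - y ∈ L := by
  rw [vectorSpan_def, Submodule.span_le, Set.vsub_subset_iff]
  rfl

theorem span_setOf_sub_eq_vectorSpan {k V : Type*} [Ring k] [AddCommGroup V] [Module k V]
    (s : Set V) : Submodule.span k {c | ∃ x ∈ s, ∃ y ∈ s, c = x - y} = vectorSpan k s := by
  rw [vectorSpan_def]
  congr 1
  ext c
  simp [Set.mem_vsub, eq_comm]

section KreinMilman

variable {E : Type*} [AddCommGroup E] [Module ℝ E] [TopologicalSpace E] [T2Space E]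
  [IsTopologicalAddGroup E] [ContinuousSMul ℝ E] [LocallyConvexSpace ℝ E]

theorem Set.Finite.convexHull_extremePoints_convexHull {s : Set E} (hs : s.Finite) :
    convexHull ℝ ((convexHull ℝ s).extremePoints ℝ) = convexHull ℝ s := by
  have hfin : ((convexHull ℝ s).extremePoints ℝ).Finite :=
    hs.subset extremePoints_convexHull_subset
  rw [← (hfin.isClosed_convexHull (𝕜 := ℝ)).closure_eq]
  exact closure_convexHull_extremePoints (hs.isCompact_convexHull ℝ) (convex_convexHull ℝ s)

theorem Set.Finite.affineSpan_extremePoints_convexHull {s : Set E} (hs : s.Finite) :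
    affineSpan ℝ ((convexHull ℝ s).extremePoints ℝ) = affineSpan ℝ s := by
  rw [← affineSpan_convexHull, hs.convexHull_extremePoints_convexHull, affineSpan_convexHull]

end KreinMilman

theorem colSpan_mono {d m : ℕ} (A : (Fin d → ℝ) → Matrix (Fin d) (Fin m) ℝ)
    {S T : Set (Fin d → ℝ)} (h : S ⊆ T) : colSpan d m A S ≤ colSpan d m A T :=
  Submodule.span_mono fun _ ⟨x, hx, j, hc⟩ => ⟨x, h hx, j, hc⟩

/-- **Lemma lem:global-equivalence.** For a finite game the following are
equivalent: (i) all differences `x - y`, `x, y ∈ X`, lie in the span `L` of all columns of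
the observation matrices; (ii) all differences of Pareto optimal actions (extreme points of
`conv X`) lie in `L`; (iii) there is a global observer set `Y ⊆ X`, i.e. a subset whose
column span contains `D = span {x - y : x, y ∈ X}`. -/
theorem stmt14 (d m : ℕ) (X : Finset (Fin d → ℝ))
    (A : (Fin d → ℝ) → Matrix (Fin d) (Fin m) ℝ) :
    ((∀ x ∈ X, ∀ y ∈ X, x - y ∈ colSpan d m A (X : Set (Fin d → ℝ))) ↔
      (∀ x ∈ Set.extremePoints ℝ (convexHull ℝ (X : Set (Fin d → ℝ))),
        ∀ y ∈ Set.extremePoints ℝ (convexHull ℝ (X : Set (Fin d → ℝ))),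
          x - y ∈ colSpan d m A (X : Set (Fin d → ℝ)))) ∧
    ((∀ x ∈ X, ∀ y ∈ X, x - y ∈ colSpan d m A (X : Set (Fin d → ℝ))) ↔
      (∃ Y : Finset (Fin d → ℝ), Y ⊆ X ∧
        Submodule.span ℝ {c : Fin d → ℝ | ∃ x ∈ X, ∃ y ∈ X, c = x - y} ≤
          colSpan d m A (Y : Set (Fin d → ℝ)))) := by
  have hX : ∀ L : Submodule ℝ (Fin d → ℝ),
      (∀ x ∈ X, ∀ y ∈ X, x - y ∈ L) ↔ vectorSpan ℝ (X : Set (Fin d → ℝ)) ≤ L := fun L =>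
    vectorSpan_le_iff_sub_mem.symm
  have hvec : vectorSpan ℝ ((convexHull ℝ (X : Set (Fin d → ℝ))).extremePoints ℝ) =
      vectorSpan ℝ (X : Set (Fin d → ℝ)) := by
    rw [← direction_affineSpan, X.finite_toSet.affineSpan_extremePoints_convexHull,
      direction_affineSpan]
  have hD : Submodule.span ℝ {c : Fin d → ℝ | ∃ x ∈ X, ∃ y ∈ X, c = x - y} =
      vectorSpan ℝ (X : Set (Fin d → ℝ)) :=
    span_setOf_sub_eq_vectorSpan _
  rw [hX, ← vectorSpan_le_iff_sub_mem, hvec, hD]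
  exact ⟨Iff.rfl, fun h => ⟨X, subset_rfl, h⟩, fun ⟨Y, hYX, h⟩ => h.trans (colSpan_mono A hYX)⟩
end

section
/- Let X ⊂ ℝ^d be a finite set and for each x ∈ X let A_x ∈ ℝ^{d×m} be a matrix. Then the following two conditions are equivalent: (i) for every convex set C ⊆ ℝ^d and all x, y ∈ P(C), x − y lies in the span of the columns of the matrices A_z with z ∈ P(C); (ii) for every pair x, y of neighboring Pareto optimal actions, x − y lies in the span of the columns of the matrices A_z with z ∈ N_{xy}. -/
/-!
(i) ⇒ (ii): a parameter `θ₀` in the relative interior of `C_x ∩ C_y` has `P({θ₀}) ⊆ N_xy`.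

(ii) ⇒ (i): the set of optimal actions is upper semicontinuous in `θ`, so along a convex (hence
preconnected) `C` the class of an optimal action modulo the column span is locally constant, and
it suffices to link two actions optimal at a single `θ`. Every extreme point of the optimal face at
`θ` is the unique optimum at some parameter near `θ`. Joining two such parameters through a
generic one by two segments, the optimal actions at each point on the way are collinear, and the
two outermost actions of a collinear optimal set are neighbors whose `N_ab` is optimal there.
-/

open Matrix Finset

/-- The cell of an action `x`: the set of parameters `θ` for which `x` is optimal in `X`. -/
def cellOf (d : ℕ) (X : Finset (Fin d → ℝ)) (x : Fin d → ℝ) : Set (Fin d → ℝ) :=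
  {θ | ∀ y ∈ X, y ⬝ᵥ θ ≤ x ⬝ᵥ θ}

/-- An action is Pareto optimal if it is an extreme point of the convex hull of `X`. -/
def paretoOpt (d : ℕ) (X : Finset (Fin d → ℝ)) (x : Fin d → ℝ) : Prop :=
  x ∈ Set.extremePoints ℝ (convexHull ℝ (X : Set (Fin d → ℝ)))

/-- The set of plausible maximizers for a set of parameters `C`. -/
def plausibleSet (d : ℕ) (X : Finset (Fin d → ℝ)) (C : Set (Fin d → ℝ)) :
    Set (Fin d → ℝ) :=
  {x | x ∈ X ∧ ∃ θ ∈ C, θ ∈ cellOf d X x}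

/-- Two Pareto optimal actions are neighbors if the span of the intersection of their cells
has dimension `d - 1`. -/
def neighborActs (d : ℕ) (X : Finset (Fin d → ℝ)) (x y : Fin d → ℝ) : Prop :=
  paretoOpt d X x ∧ paretoOpt d X y ∧
    Module.finrank ℝ (Submodule.span ℝ (cellOf d X x ∩ cellOf d X y)) = d - 1

open Topology MeasureTheory

section Convex

variable {E : Type*} [AddCommGroup E] [Module ℝ E]

lemma convex_insert_setOf_lt (l : E →ₗ[ℝ] ℝ) (x : E) :
    Convex ℝ (insert x {y | l y < l x}) := by
  have hle : ∀ y ∈ insert x {y | l y < l x}, l y ≤ l x := by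
    rintro y (rfl | hy)
    exacts [le_rfl, le_of_lt hy]
  refine convex_iff_forall_pos.2 fun a ha b hb s t hs ht hst => ?_
  by_cases hab : a = x ∧ b = x
  · left
    rw [hab.1, hab.2, ← add_smul, hst, one_smul]
  right
  have hsum : s * l x + t * l x = l x := by rw [← add_mul, hst, one_mul]
  change l (s • a + t • b) < l x
  simp only [map_add, map_smul, smul_eq_mul]
  rcases not_and_or.1 hab with ha' | hb'
  · have := (hle a ha).lt_of_ne fun h => ha' (ha.resolve_right (by simp [h]))
    nlinarith [hle b hb]
  · have := (hle b hb).lt_of_ne fun h => hb' (hb.resolve_right (by simp [h]))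
    nlinarith [hle a ha]

lemma mem_extremePoints_convexHull_of_forall_lt {S : Set E} {x : E} (hx : x ∈ S)
    (l : E →ₗ[ℝ] ℝ) (hl : ∀ z ∈ S, z ≠ x → l z < l x) :
    x ∈ (convexHull ℝ S).extremePoints ℝ := by
  have hsub : convexHull ℝ S ⊆ insert x {y | l y < l x} :=
    convexHull_min (fun z hz => or_iff_not_imp_left.2 (hl z hz)) (convex_insert_setOf_lt l x)
  rw [(convex_convexHull ℝ S).mem_extremePoints_iff_convex_sdiff]
  refine ⟨subset_convexHull ℝ S hx, ?_⟩
  have : convexHull ℝ S \ {x} = convexHull ℝ S ∩ {y | l y < l x} := by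
    ext y
    refine ⟨fun hy => ⟨hy.1, (hsub hy.1).resolve_left hy.2⟩, fun hy => ⟨hy.1, ?_⟩⟩
    rintro rfl
    exact lt_irrefl (l y) hy.2
  rw [this]
  exact (convex_convexHull ℝ S).inter (convex_halfSpace_lt l.isLinear _)

lemma sub_mem_of_mem_convexHull {W : Submodule ℝ E} {S : Set E}
    (hS : ∀ p ∈ S, ∀ q ∈ S, p - q ∈ W) {u v : E} (hu : u ∈ convexHull ℝ S)
    (hv : v ∈ convexHull ℝ S) : u - v ∈ W := by
  obtain ⟨q, hq⟩ := convexHull_nonempty_iff.1 ⟨u, hu⟩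
  have hsub : convexHull ℝ S ⊆ AffineSubspace.mk' q W :=
    convexHull_min (fun p hp => AffineSubspace.mem_mk'.2 (hS p hp q hq)) (AffineSubspace.convex _)
  have := W.sub_mem (AffineSubspace.mem_mk'.1 (hsub hu)) (AffineSubspace.mem_mk'.1 (hsub hv))
  simpa using this

variable [TopologicalSpace E] [T2Space E] [IsTopologicalAddGroup E] [ContinuousSMul ℝ E]
  [LocallyConvexSpace ℝ E]

lemma exists_forall_lt_of_mem_extremePoints_convexHull {S : Set E} (hS : S.Finite) {p : E}
    (hp : p ∈ (convexHull ℝ S).extremePoints ℝ) :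
    ∃ f : StrongDual ℝ E, ∀ z ∈ S, z ≠ p → f z < f p := by
  have hp' : p ∉ convexHull ℝ (S \ {p}) := fun h =>
    ((convex_convexHull ℝ S).mem_extremePoints_iff_mem_sdiff_convexHull_sdiff.1 hp).2
      (convexHull_mono (Set.sdiff_subset_sdiff_left (subset_convexHull ℝ S)) h)
  obtain ⟨f, u, hf, hfp⟩ := geometric_hahn_banach_closed_point (convex_convexHull ℝ _)
    (hS.sdiff.isCompact_convexHull ℝ).isClosed hp'
  exact ⟨f, fun z hz hzp => (hf z (subset_convexHull ℝ _ ⟨hz, hzp⟩)).trans hfp⟩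

lemma convexHull_extremePoints_convexHull {S : Set E} (hS : S.Finite) :
    convexHull ℝ ((convexHull ℝ S).extremePoints ℝ) = convexHull ℝ S := by
  have hfin : ((convexHull ℝ S).extremePoints ℝ).Finite := hS.subset extremePoints_convexHull_subset
  exact (hfin.isCompact_convexHull ℝ).isClosed.closure_eq.symm.trans
    (closure_convexHull_extremePoints (hS.isCompact_convexHull ℝ) (convex_convexHull ℝ S))

end Convex

namespace LocalObservability

variable {d : ℕ} {X : Finset (Fin d → ℝ)}

lemma exists_dotProduct_eq (f : (Fin d → ℝ) →ₗ[ℝ] ℝ) :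
    ∃ η : Fin d → ℝ, ∀ z, f z = z ⬝ᵥ η :=
  ⟨fun i => f fun j => if i = j then 1 else 0, fun z => f.pi_apply_eq_sum_univ z⟩

lemma exists_mem_forall_dotProduct_ne_zero {U : Set (Fin d → ℝ)} (hU : IsOpen U)
    (hne : U.Nonempty) (G : Finset (Fin d → ℝ)) :
    ∃ β ∈ U, ∀ g ∈ G, g ≠ 0 → g ⬝ᵥ β ≠ 0 := by
  by_contra! h
  have hnull : ∀ g ∈ (G.filter (· ≠ 0) : Set (Fin d → ℝ)),
      volume (LinearMap.ker (dotProductBilin ℝ ℝ g) : Set (Fin d → ℝ)) = 0 := by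
    intro g hg
    refine Measure.addHaar_submodule _ _ fun htop => (Finset.mem_filter.1 hg).2 ?_
    have : g ∈ LinearMap.ker (dotProductBilin ℝ ℝ g) := htop ▸ Submodule.mem_top
    simpa using this
  refine (hU.measure_pos volume hne).ne' (measure_mono_null (fun β hβ => ?_)
    ((measure_biUnion_null_iff (G.filter (· ≠ 0)).countable_toSet).2 hnull))
  obtain ⟨g, hg, hg0, hgβ⟩ := h β hβ
  exact Set.mem_biUnion (Finset.mem_filter.2 ⟨hg, hg0⟩) (by simpa using hgβ)

lemma tendsto_add_smul_nhdsGT (θ η : Fin d → ℝ) :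
    Filter.Tendsto (fun δ : ℝ => θ + δ • η) (𝓝[>] 0) (𝓝 θ) := by
  refine tendsto_nhdsWithin_of_tendsto_nhds ?_
  simpa using ((continuous_id.smul continuous_const).const_add θ).tendsto (0 : ℝ)

/-- `P({θ})` in the notation of the paper. -/
def optimalSet (X : Finset (Fin d → ℝ)) (θ : Fin d → ℝ) : Set (Fin d → ℝ) :=
  {z | z ∈ X ∧ θ ∈ cellOf d X z}

def columnSpan {m : ℕ} (A : (Fin d → ℝ) → Matrix (Fin d) (Fin m) ℝ) (S : Set (Fin d → ℝ)) :
    Submodule ℝ (Fin d → ℝ) :=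
  Submodule.span ℝ {c | ∃ z ∈ S, ∃ j : Fin m, c = (A z)ᵀ j}

lemma columnSpan_mono {m : ℕ} (A : (Fin d → ℝ) → Matrix (Fin d) (Fin m) ℝ)
    {S T : Set (Fin d → ℝ)} (h : S ⊆ T) : columnSpan A S ≤ columnSpan A T :=
  Submodule.span_mono fun _ ⟨z, hz, j, hc⟩ => ⟨z, h hz, j, hc⟩

/-- Condition (ii) of the theorem. -/
def NeighborsLocallyObservable {m : ℕ} (X : Finset (Fin d → ℝ))
    (A : (Fin d → ℝ) → Matrix (Fin d) (Fin m) ℝ) : Prop :=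
  ∀ x ∈ X, ∀ y ∈ X, neighborActs d X x y →
    x - y ∈ Submodule.span ℝ
      {c : Fin d → ℝ | ∃ z ∈ X,
        (cellOf d X x ∩ cellOf d X y ⊆ cellOf d X z) ∧ ∃ j : Fin m, c = (A z)ᵀ j}

lemma dotProduct_eq_of_mem_cellOf {z w θ : Fin d → ℝ} (hz : z ∈ X) (hw : w ∈ X)
    (hzθ : θ ∈ cellOf d X z) (hwθ : θ ∈ cellOf d X w) : z ⬝ᵥ θ = w ⬝ᵥ θ :=
  le_antisymm (hwθ z hz) (hzθ w hw)

lemma finite_optimalSet (θ : Fin d → ℝ) : (optimalSet X θ).Finite :=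
  X.finite_toSet.subset fun _ hz => hz.1

lemma optimalSet_nonempty (hX : X.Nonempty) (θ : Fin d → ℝ) : (optimalSet X θ).Nonempty := by
  obtain ⟨z, hz, hmax⟩ := X.exists_max_image (· ⬝ᵥ θ) hX
  exact ⟨z, hz, hmax⟩

lemma sum_mem_cellOf {ι : Type*} (s : Finset ι) {x : Fin d → ℝ} {θ : ι → Fin d → ℝ}
    (h : ∀ i ∈ s, θ i ∈ cellOf d X x) : ∑ i ∈ s, θ i ∈ cellOf d X x := by
  refine Finset.sum_induction _ (· ∈ cellOf d X x) (fun a b ha hb y hy => ?_)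
    (fun y _ => by simp) h
  simpa only [dotProduct_add] using add_le_add (ha y hy) (hb y hy)

lemma eventually_optimalSet_subset (θ : Fin d → ℝ) :
    ∀ᶠ θ' in 𝓝 θ, optimalSet X θ' ⊆ optimalSet X θ := by
  have hcont (z : Fin d → ℝ) : Continuous (z ⬝ᵥ ·) := continuous_const.dotProduct continuous_id
  have : ∀ z ∈ X, ∀ᶠ θ' in 𝓝 θ, z ∈ optimalSet X θ' → z ∈ optimalSet X θ := by
    intro z hz
    by_cases hzθ : θ ∈ cellOf d X z
    · exact Filter.Eventually.of_forall fun _ _ => ⟨hz, hzθ⟩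
    obtain ⟨y, hy, hlt⟩ : ∃ y ∈ X, z ⬝ᵥ θ < y ⬝ᵥ θ := by simpa [cellOf] using hzθ
    filter_upwards [(hcont z).continuousAt.eventually_lt (hcont y).continuousAt hlt]
      with θ' hθ' hzθ'
    exact absurd (hzθ'.2 y hy) (not_le.2 hθ')
  filter_upwards [(Filter.eventually_all_finset X).2 this] with θ' hθ' z hz
  exact hθ' z hz.1 hz

lemma eventually_optimalSet_add_smul (θ η : Fin d → ℝ) :
    ∀ᶠ δ in 𝓝[>] (0 : ℝ), optimalSet X (θ + δ • η) =
      {z ∈ optimalSet X θ | ∀ y ∈ optimalSet X θ, y ⬝ᵥ η ≤ z ⬝ᵥ η} := by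
  filter_upwards [(tendsto_add_smul_nhdsGT θ η).eventually (eventually_optimalSet_subset θ), self_mem_nhdsWithin]
    with δ hsub (hδ : 0 < δ)
  have hval (z : Fin d → ℝ) : z ⬝ᵥ (θ + δ • η) = z ⬝ᵥ θ + δ * (z ⬝ᵥ η) := by
    rw [dotProduct_add, dotProduct_smul, smul_eq_mul]
  ext z
  constructor
  · intro hz
    refine ⟨hsub hz, fun y hy => ?_⟩
    have h1 := hz.2 y hy.1
    have h2 := dotProduct_eq_of_mem_cellOf hy.1 (hsub hz).1 hy.2 (hsub hz).2
    rw [hval, hval, h2] at h1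
    exact le_of_mul_le_mul_left (by linarith) hδ
  · rintro ⟨hz, hbest⟩
    obtain ⟨m, hm⟩ := optimalSet_nonempty ⟨z, hz.1⟩ (θ + δ • η)
    refine ⟨hz.1, fun y hy => (hm.2 y hy).trans ?_⟩
    rw [hval, hval, dotProduct_eq_of_mem_cellOf (hsub hm).1 hz.1 (hsub hm).2 hz.2]
    gcongr
    exact hbest m (hsub hm)

lemma sub_mem_of_isPreconnected {K : Set (Fin d → ℝ)} (hK : IsPreconnected K)
    (W : Submodule ℝ (Fin d → ℝ))
    (hW : ∀ ψ ∈ K, ∀ w ∈ optimalSet X ψ, ∀ w' ∈ optimalSet X ψ, w - w' ∈ W)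
    {θ₀ θ₁ w₀ w₁ : Fin d → ℝ} (hθ₀ : θ₀ ∈ K) (hθ₁ : θ₁ ∈ K)
    (hw₀ : w₀ ∈ optimalSet X θ₀) (hw₁ : w₁ ∈ optimalSet X θ₁) : w₀ - w₁ ∈ W := by
  have := isPreconnected_iff_preconnectedSpace.mp hK
  choose opt hopt using optimalSet_nonempty (X := X) ⟨w₀, hw₀.1⟩
  -- the class of an optimal action modulo `W` is locally constant along `K`
  have hconst : IsLocallyConstant fun ψ : K => (Submodule.Quotient.mk (opt ψ) : _ ⧸ W) := by
    refine (IsLocallyConstant.iff_eventually_eq _).2 fun ψ => ?_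
    filter_upwards [continuous_subtype_val.continuousAt.eventually
      (eventually_optimalSet_subset (X := X) ψ)] with ψ' hψ'
    exact (Submodule.Quotient.eq W).2 (hW ψ ψ.2 _ (hψ' (hopt ψ')) _ (hopt ψ))
  have h := (Submodule.Quotient.eq W).1 (hconst.apply_eq_of_preconnectedSpace ⟨θ₀, hθ₀⟩ ⟨θ₁, hθ₁⟩)
  have := W.add_mem (W.add_mem (hW θ₀ hθ₀ _ hw₀ _ (hopt θ₀)) h) (hW θ₁ hθ₁ _ (hopt θ₁) _ hw₁)
  simpa using this

lemma exists_mem_inter_cellOf_forall_subset {x : Fin d → ℝ} (hx : x ∈ X) (y : Fin d → ℝ) :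
    ∃ θ₀ ∈ cellOf d X x ∩ cellOf d X y,
      ∀ z ∈ X, θ₀ ∈ cellOf d X z → cellOf d X x ∩ cellOf d X y ⊆ cellOf d X z := by
  classical
  set F := cellOf d X x ∩ cellOf d X y
  have hwit : ∀ z ∈ X.filter (¬ F ⊆ cellOf d X ·), ∃ θ ∈ F, θ ∉ cellOf d X z := by
    intro z hz
    simpa [Set.not_subset] using (Finset.mem_filter.1 hz).2
  choose! θ hθF hθz using hwit
  -- summing one witness per bad action keeps every bad action strictly below `x`
  refine ⟨∑ z ∈ X.filter (¬ F ⊆ cellOf d X ·), θ z,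
    ⟨sum_mem_cellOf _ fun z hz => (hθF z hz).1, sum_mem_cellOf _ fun z hz => (hθF z hz).2⟩,
    fun z hz hzθ => ?_⟩
  by_contra hbad
  have hzbad : z ∈ X.filter (¬ F ⊆ cellOf d X ·) := Finset.mem_filter.2 ⟨hz, hbad⟩
  refine absurd (hzθ x hx) (not_le.2 ?_)
  simp only [dotProduct_sum]
  refine Finset.sum_lt_sum (fun w hw => (hθF w hw).1 z hz) ⟨z, hzbad, ?_⟩
  obtain ⟨v, hv, hlt⟩ : ∃ v ∈ X, z ⬝ᵥ θ z < v ⬝ᵥ θ z := by simpa [cellOf] using hθz z hzbad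
  exact hlt.trans_le ((hθF z hzbad).1 v hv)

lemma setOf_isMax_eq_singleton {S : Set (Fin d → ℝ)} {b η : Fin d → ℝ} (hb : b ∈ S)
    (h : ∀ z ∈ S, z ≠ b → z ⬝ᵥ η < b ⬝ᵥ η) :
    {z ∈ S | ∀ y ∈ S, y ⬝ᵥ η ≤ z ⬝ᵥ η} = {b} := by
  ext z
  refine ⟨fun hz => by_contra fun hzb => ?_, ?_⟩
  · exact absurd (hz.2 b hb) (not_le.2 (h z hz.1 hzb))
  · rintro rfl
    exact ⟨hb, fun y hy => (eq_or_ne y z).elim (fun h => h ▸ le_rfl) fun hyz => (h y hy hyz).le⟩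

lemma paretoOpt_of_optimalSet_eq_singleton {α b : Fin d → ℝ} (h : optimalSet X α = {b}) :
    paretoOpt d X b := by
  have hb : b ∈ optimalSet X α := h ▸ rfl
  refine mem_extremePoints_convexHull_of_forall_lt hb.1 ((dotProductBilin ℝ ℝ).flip α)
    fun z hz hzb => ?_
  have hzα : α ∉ cellOf d X z := fun hzα => hzb (h ▸ ⟨hz, hzα⟩ : z ∈ ({b} : Set _))
  obtain ⟨y, hy, hlt⟩ : ∃ y ∈ X, z ⬝ᵥ α < y ⬝ᵥ α := by simpa [cellOf] using hzα
  simpa using hlt.trans_le (hb.2 y hy)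

lemma paretoOpt_of_forall_lt {ψ η b : Fin d → ℝ} (hb : b ∈ optimalSet X ψ)
    (h : ∀ z ∈ optimalSet X ψ, z ≠ b → z ⬝ᵥ η < b ⬝ᵥ η) : paretoOpt d X b := by
  obtain ⟨δ, hδ⟩ := (eventually_optimalSet_add_smul (X := X) ψ η).exists
  exact paretoOpt_of_optimalSet_eq_singleton (hδ.trans (setOf_isMax_eq_singleton hb h))

lemma exists_optimalSet_eq_singleton {θ p : Fin d → ℝ}
    (hp : p ∈ (convexHull ℝ (optimalSet X θ)).extremePoints ℝ) {U : Set (Fin d → ℝ)}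
    (hU : U ∈ 𝓝 θ) : ∃ α ∈ U, optimalSet X α = {p} := by
  obtain ⟨f, hf⟩ := exists_forall_lt_of_mem_extremePoints_convexHull
    (finite_optimalSet θ) hp
  obtain ⟨η, hη⟩ := exists_dotProduct_eq (f : (Fin d → ℝ) →ₗ[ℝ] ℝ)
  have hmax : ∀ z ∈ optimalSet X θ, z ≠ p → z ⬝ᵥ η < p ⬝ᵥ η := fun z hz hzp => by
    rw [← hη, ← hη]
    exact hf z hz hzp
  obtain ⟨δ, hδU, hδ⟩ := ((tendsto_add_smul_nhdsGT θ η).eventually hU).and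
    (eventually_optimalSet_add_smul (X := X) θ η) |>.exists
  exact ⟨_, hδU, hδ.trans (setOf_isMax_eq_singleton (extremePoints_convexHull_subset hp) hmax)⟩

lemma eq_of_dotProduct_eq_of_collinear {S : Set (Fin d → ℝ)} (hS : Collinear ℝ S)
    {w w' p q : Fin d → ℝ} (hw : w ∈ S) (hw' : w' ∈ S) (hww' : w ≠ w') (hp : p ∈ S)
    (hq : q ∈ S) (h : p ⬝ᵥ (w' - w) = q ⬝ᵥ (w' - w)) : p = q := by
  have hpq : p -ᵥ q ∈ (affineSpan ℝ {w, w'}).direction :=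
    AffineSubspace.vsub_mem_direction (hS.mem_affineSpan_of_mem_of_ne hw hw' hp hww')
      (hS.mem_affineSpan_of_mem_of_ne hw hw' hq hww')
  rw [direction_affineSpan, vectorSpan_pair, Submodule.mem_span_singleton] at hpq
  obtain ⟨c, hc⟩ := hpq
  rw [← sub_eq_zero, ← sub_dotProduct] at h
  simp only [vsub_eq_sub] at hc
  rw [← hc, smul_dotProduct, smul_eq_mul, mul_eq_zero, ← neg_sub w', neg_dotProduct,
    neg_eq_zero, dotProduct_self_eq_zero, sub_eq_zero] at h
  rcases h with rfl | h
  · rwa [zero_smul, eq_comm, sub_eq_zero] at hc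
  · exact absurd h.symm hww'

lemma exists_paretoOpt_pair_of_collinear {ψ w w' : Fin d → ℝ}
    (hcol : Collinear ℝ (optimalSet X ψ)) (hw : w ∈ optimalSet X ψ)
    (hw' : w' ∈ optimalSet X ψ) (hww' : w ≠ w') :
    ∃ a ∈ optimalSet X ψ, ∃ b ∈ optimalSet X ψ, a ≠ b ∧ paretoOpt d X a ∧ paretoOpt d X b := by
  set u := w' - w
  have hinj := fun {p q} => eq_of_dotProduct_eq_of_collinear hcol hw hw' hww' (p := p) (q := q)
  obtain ⟨a, ha, hmin⟩ := Set.exists_min_image _ (· ⬝ᵥ u) (finite_optimalSet ψ) ⟨w, hw⟩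
  obtain ⟨b, hb, hmax⟩ := Set.exists_max_image _ (· ⬝ᵥ u) (finite_optimalSet ψ) ⟨w, hw⟩
  have hwu : w ⬝ᵥ u < w' ⬝ᵥ u := by
    rw [← sub_pos, ← sub_dotProduct]
    have := dotProduct_self_star_pos_iff.2 (sub_ne_zero.2 hww'.symm)
    rwa [star_trivial] at this
  refine ⟨a, ha, b, hb, fun hab => ?_, paretoOpt_of_forall_lt (η := -u) ha fun z hz hza => ?_,
    paretoOpt_of_forall_lt (η := u) hb fun z hz hzb => ?_⟩
  · have := (hmin w hw).trans_lt (hwu.trans_le (hmax w' hw'))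
    rw [hab] at this
    exact lt_irrefl _ this
  · simp only [dotProduct_neg, neg_lt_neg_iff]
    exact (hmin z hz).lt_of_ne fun h => hza (hinj hz ha h.symm)
  · exact (hmax z hz).lt_of_ne fun h => hzb (hinj hz hb h)

lemma span_cellOf_inter_eq_ker {ψ a b : Fin d → ℝ} (ha : a ∈ optimalSet X ψ)
    (hb : b ∈ optimalSet X ψ) (hline : ∀ z ∈ optimalSet X ψ, z ∈ affineSpan ℝ {a, b}) :
    Submodule.span ℝ (cellOf d X a ∩ cellOf d X b) =
      LinearMap.ker (dotProductBilin ℝ ℝ (b - a)) := by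
  refine le_antisymm (Submodule.span_le.2 fun θ hθ => ?_) fun h hh => ?_
  · simp [dotProduct_eq_of_mem_cellOf hb.1 ha.1 hθ.2 hθ.1]
  simp only [LinearMap.mem_ker, dotProductBilin_apply_apply] at hh
  have hconst : ∀ z ∈ optimalSet X ψ, z ⬝ᵥ h = a ⬝ᵥ h := by
    intro z hz
    have hza : z -ᵥ a ∈ (affineSpan ℝ {a, b}).direction :=
      AffineSubspace.vsub_mem_direction (hline z hz) (hline a ha)
    rw [direction_affineSpan, vectorSpan_pair, Submodule.mem_span_singleton] at hza
    obtain ⟨c, hc⟩ := hza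
    rw [← sub_eq_zero, ← sub_dotProduct, ← vsub_eq_sub, ← hc, vsub_eq_sub, smul_dotProduct,
      ← neg_sub b a, neg_dotProduct, hh, neg_zero, smul_zero]
  obtain ⟨δ, hδ, hM⟩ := (eventually_mem_nhdsWithin.and
    (eventually_optimalSet_add_smul (X := X) ψ h)).exists
  have hall : optimalSet X (ψ + δ • h) = optimalSet X ψ := by
    rw [hM]
    exact Set.sep_eq_self_iff_mem_true.2 fun z hz y hy => by rw [hconst y hy, hconst z hz]
  have hmem : ψ + δ • h ∈ cellOf d X a ∩ cellOf d X b :=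
    ⟨(hall ▸ ha : a ∈ optimalSet X (ψ + δ • h)).2, (hall ▸ hb : b ∈ optimalSet X (ψ + δ • h)).2⟩
  have := Submodule.smul_mem _ δ⁻¹ (Submodule.sub_mem _ (Submodule.subset_span hmem)
    (Submodule.subset_span ⟨ha.2, hb.2⟩))
  rwa [add_sub_cancel_left, smul_smul, inv_mul_cancel₀ (ne_of_gt hδ), one_smul] at this

lemma finrank_span_cellOf_inter {ψ a b : Fin d → ℝ} (ha : a ∈ optimalSet X ψ)
    (hb : b ∈ optimalSet X ψ) (hab : a ≠ b)
    (hline : ∀ z ∈ optimalSet X ψ, z ∈ affineSpan ℝ {a, b}) :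
    Module.finrank ℝ (Submodule.span ℝ (cellOf d X a ∩ cellOf d X b)) = d - 1 := by
  have hne : dotProductBilin ℝ ℝ (b - a) ≠ 0 := fun h0 => by
    have := LinearMap.congr_fun h0 (b - a)
    simp only [dotProductBilin_apply_apply, LinearMap.zero_apply, dotProduct_self_eq_zero,
      sub_eq_zero] at this
    exact hab this.symm
  have := Module.Dual.finrank_ker_add_one_of_ne_zero hne
  rw [Module.finrank_fin_fun] at this
  rw [span_cellOf_inter_eq_ker ha hb hline]
  omega

variable {m : ℕ} {A : (Fin d → ℝ) → Matrix (Fin d) (Fin m) ℝ}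

lemma sub_mem_columnSpan_of_collinear (hL : NeighborsLocallyObservable X A) {ψ w w' : Fin d → ℝ}
    (hcol : Collinear ℝ (optimalSet X ψ)) (hw : w ∈ optimalSet X ψ)
    (hw' : w' ∈ optimalSet X ψ) : w - w' ∈ columnSpan A (optimalSet X ψ) := by
  by_cases hww' : w = w'
  · simp [hww']
  obtain ⟨a, ha, b, hb, hab, hpa, hpb⟩ := exists_paretoOpt_pair_of_collinear hcol hw hw' hww'
  have hline : ∀ z ∈ optimalSet X ψ, z ∈ affineSpan ℝ {a, b} :=
    fun z hz => hcol.mem_affineSpan_of_mem_of_ne ha hb hz hab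
  have hnb : neighborActs d X a b := ⟨hpa, hpb, finrank_span_cellOf_inter ha hb hab hline⟩
  have hab_mem : a - b ∈ columnSpan A (optimalSet X ψ) := by
    refine Submodule.span_mono ?_ (hL a ha.1 b hb.1 hnb)
    rintro c ⟨z, hz, hsub, j, rfl⟩
    exact ⟨z, ⟨hz, hsub ⟨ha.2, hb.2⟩⟩, j, rfl⟩
  have hww'_mem : w -ᵥ w' ∈ (affineSpan ℝ {a, b}).direction :=
    AffineSubspace.vsub_mem_direction (hline w hw) (hline w' hw')
  rw [direction_affineSpan, vectorSpan_pair] at hww'_mem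
  exact (Submodule.span_singleton_le_iff_mem _ _).2 hab_mem hww'_mem

/-- `tieNormal α w w' w'' = 0` says that `w' - w` and `w'' - w` are proportional, with the
ratio of their values at `α`. -/
def tieNormal (α w w' w'' : Fin d → ℝ) : Fin d → ℝ :=
  ((w' - w) ⬝ᵥ α) • (w'' - w) - ((w'' - w) ⬝ᵥ α) • (w' - w)

/-- A parameter `β` is generic for the segment from `α` when it lies on none of the hyperplanes
orthogonal to these (nonzero) vectors. -/
noncomputable def genericityNormals (X : Finset (Fin d → ℝ)) (α : Fin d → ℝ) :
    Finset (Fin d → ℝ) :=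
  (X ×ˢ X).image (fun w => w.1 - w.2) ∪
    (X ×ˢ X ×ˢ X).image (fun w => tieNormal α w.1 w.2.1 w.2.2)

lemma collinear_optimalSet_of_mem_segment {α β : Fin d → ℝ}
    (hα : Collinear ℝ (optimalSet X α))
    (hβ : ∀ g ∈ genericityNormals X α, g ≠ 0 → g ⬝ᵥ β ≠ 0) {ψ : Fin d → ℝ}
    (hψ : ψ ∈ segment ℝ α β) : Collinear ℝ (optimalSet X ψ) := by
  obtain ⟨s, t, -, ht, hst, rfl⟩ := hψ
  rcases ht.eq_or_lt with rfl | ht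
  · simpa [show s = 1 by linarith] using hα
  rcases (optimalSet X (s • α + t • β)).eq_empty_or_nonempty with hM | ⟨w, hw⟩
  · exact hM ▸ collinear_empty ℝ _
  by_cases hsub : optimalSet X (s • α + t • β) ⊆ {w}
  · exact (collinear_singleton ℝ w).subset hsub
  obtain ⟨w', hw', hw'w⟩ := Set.not_subset.1 hsub
  refine (collinear_iff_of_mem hw).2 ⟨w' - w, fun v hv => ?_⟩
  have htie : ∀ z ∈ optimalSet X (s • α + t • β),
      s * ((z - w) ⬝ᵥ α) + t * ((z - w) ⬝ᵥ β) = 0 := by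
    intro z hz
    have := dotProduct_eq_of_mem_cellOf hz.1 hw.1 hz.2 hw.2
    simp only [dotProduct_add, dotProduct_smul, smul_eq_mul] at this
    simp only [sub_dotProduct]
    linarith
  have h₁ := htie w' hw'
  have h₂ := htie v hv
  have hc : (w' - w) ⬝ᵥ β ≠ 0 := hβ _ (Finset.mem_union_left _ (Finset.mem_image.2
    ⟨(w', w), Finset.mem_product.2 ⟨hw'.1, hw.1⟩, rfl⟩)) (sub_ne_zero.2 hw'w)
  have ha : s * ((w' - w) ⬝ᵥ α) ≠ 0 := fun h => hc <|
    (mul_eq_zero.1 (by linarith : t * ((w' - w) ⬝ᵥ β) = 0)).resolve_left ht.ne'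
  have hD : tieNormal α w w' v = 0 := by
    by_contra hD
    refine hβ _ (Finset.mem_union_right _ (Finset.mem_image.2
      ⟨(w, w', v), Finset.mem_product.2 ⟨hw.1, Finset.mem_product.2 ⟨hw'.1, hv.1⟩⟩, rfl⟩)) hD ?_
    have : s * (tieNormal α w w' v ⬝ᵥ β) = 0 := by
      rw [tieNormal, sub_dotProduct, smul_dotProduct, smul_dotProduct, smul_eq_mul, smul_eq_mul]
      linear_combination ((v - w) ⬝ᵥ β) * h₁ - ((w' - w) ⬝ᵥ β) * h₂
    exact (mul_eq_zero.1 this).resolve_left (left_ne_zero_of_mul ha)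
  rw [tieNormal, sub_eq_zero] at hD
  refine ⟨((v - w) ⬝ᵥ α) / ((w' - w) ⬝ᵥ α), ?_⟩
  rw [vadd_eq_add, div_eq_inv_mul, mul_smul, ← hD, smul_smul,
    inv_mul_cancel₀ (right_ne_zero_of_mul ha), one_smul, sub_add_cancel]

lemma sub_mem_columnSpan_of_mem_extremePoints (hL : NeighborsLocallyObservable X A)
    {θ p q : Fin d → ℝ} (hp : p ∈ (convexHull ℝ (optimalSet X θ)).extremePoints ℝ)
    (hq : q ∈ (convexHull ℝ (optimalSet X θ)).extremePoints ℝ) :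
    p - q ∈ columnSpan A (optimalSet X θ) := by
  obtain ⟨r, hr, hball⟩ := Metric.eventually_nhds_iff_ball.1 (eventually_optimalSet_subset θ)
  obtain ⟨αp, hαp, hMp⟩ := exists_optimalSet_eq_singleton hp (Metric.ball_mem_nhds θ hr)
  obtain ⟨αq, hαq, hMq⟩ := exists_optimalSet_eq_singleton hq (Metric.ball_mem_nhds θ hr)
  obtain ⟨β, hβ, hgen⟩ := exists_mem_forall_dotProduct_ne_zero Metric.isOpen_ball
    ⟨θ, Metric.mem_ball_self hr⟩ (genericityNormals X αp ∪ genericityNormals X αq)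
  obtain ⟨s, hs⟩ := optimalSet_nonempty ⟨p, (extremePoints_convexHull_subset hp).1⟩ β
  have hlink : ∀ α ∈ Metric.ball θ r, ∀ x, optimalSet X α = {x} →
      (∀ g ∈ genericityNormals X α, g ≠ 0 → g ⬝ᵥ β ≠ 0) →
      x - s ∈ columnSpan A (optimalSet X θ) := by
    intro α hα x hx hgenα
    refine sub_mem_of_isPreconnected (convex_segment α β).isPreconnected _
      (fun ψ hψ w hw w' hw' => ?_) (left_mem_segment ℝ α β) (right_mem_segment ℝ α β)
      (hx ▸ rfl) hs
    have hcol := collinear_optimalSet_of_mem_segment (hx ▸ collinear_singleton ℝ x) hgenα hψ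
    exact columnSpan_mono A (hball _ ((convex_ball θ r).segment_subset hα hβ hψ))
      (sub_mem_columnSpan_of_collinear hL hcol hw hw')
  have := sub_mem (hlink αp hαp p hMp fun g hg => hgen g (Finset.mem_union_left _ hg))
    (hlink αq hαq q hMq fun g hg => hgen g (Finset.mem_union_right _ hg))
  rwa [sub_sub_sub_cancel_right] at this

lemma sub_mem_columnSpan_optimalSet (hL : NeighborsLocallyObservable X A) {θ u v : Fin d → ℝ}
    (hu : u ∈ optimalSet X θ) (hv : v ∈ optimalSet X θ) :
    u - v ∈ columnSpan A (optimalSet X θ) := by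
  have hhull := convexHull_extremePoints_convexHull (finite_optimalSet (X := X) θ)
  exact sub_mem_of_mem_convexHull
    (fun p hp q hq => sub_mem_columnSpan_of_mem_extremePoints hL hp hq)
    (hhull.ge (subset_convexHull ℝ _ hu)) (hhull.ge (subset_convexHull ℝ _ hv))

end LocalObservability

open LocalObservability

/-- **Lemma lem:local-equivalence.** Local observability: for every convex
`C` and all `x, y ∈ P(C)`, `x - y` lies in the column span of `(A_z : z ∈ P(C))`, if and
only if for every pair of neighboring Pareto optimal actions `x, y`, `x - y` lies in the
column span of `(A_z : z ∈ N_{xy})`. -/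
theorem stmt15 (d m : ℕ) (X : Finset (Fin d → ℝ))
    (A : (Fin d → ℝ) → Matrix (Fin d) (Fin m) ℝ) :
    (∀ C : Set (Fin d → ℝ), Convex ℝ C →
      ∀ x ∈ plausibleSet d X C, ∀ y ∈ plausibleSet d X C,
        x - y ∈ Submodule.span ℝ
          {c : Fin d → ℝ | ∃ z ∈ plausibleSet d X C, ∃ j : Fin m, c = (A z)ᵀ j}) ↔
    (∀ x ∈ X, ∀ y ∈ X, neighborActs d X x y →
      x - y ∈ Submodule.span ℝ
        {c : Fin d → ℝ | ∃ z ∈ X,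
          (cellOf d X x ∩ cellOf d X y ⊆ cellOf d X z) ∧ ∃ j : Fin m, c = (A z)ᵀ j}) := by
  constructor
  · intro h x hx y hy _
    obtain ⟨θ₀, hθ₀, hθ₀z⟩ := exists_mem_inter_cellOf_forall_subset hx y
    refine Submodule.span_mono ?_
      (h {θ₀} (convex_singleton θ₀) x ⟨hx, θ₀, rfl, hθ₀.1⟩ y ⟨hy, θ₀, rfl, hθ₀.2⟩)
    rintro c ⟨z, ⟨hz, _, rfl, hzθ₀⟩, j, rfl⟩
    exact ⟨z, hz, hθ₀z z hz hzθ₀, j, rfl⟩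
  · rintro hL C hC x ⟨hx, θx, hθxC, hθx⟩ y ⟨hy, θy, hθyC, hθy⟩
    refine sub_mem_of_isPreconnected hC.isPreconnected _ (fun ψ hψ w hw w' hw' => ?_)
      hθxC hθyC (w₀ := x) (w₁ := y) ⟨hx, hθx⟩ ⟨hy, hθy⟩
    exact columnSpan_mono A (T := plausibleSet d X C) (fun z hz => ⟨hz.1, ψ, hψ, hz.2⟩)
      (sub_mem_columnSpan_optimalSet hL hw hw')
end

section
/- Let X ⊂ ℝ^d be a finite set and C ⊆ ℝ^d a convex set. Then for any two Pareto optimal actions x, y ∈ P(C) there exists a finite sequence x = x_1, x_2, …, x_m = y of Pareto optimal actions, all belonging to P(C), such that x_i and x_{i+1} are neighbors for every 1 ≤ i < m. -/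
/-!
Move the parameter along the segment from a parameter of `x` to one of `y` inside `C`. The set
of maximizers `F_θ` of `⟨·, θ⟩` over `X` can only shrink under small perturbations of `θ`, so by
connectedness of the segment it suffices to join any two Pareto optimal points `a, b` of a single
`F_θ` by neighbors inside `F_θ`. This goes by induction on `|F_θ|`. If `F_θ` lies on the line
through `a` and `b`, the cells of `a` and `b` meet in the hyperplane `⟨a - b, ·⟩ = 0`, so `a`
and `b` are neighbors. Otherwise sweep `θ + ε η` for `η` on a segment from a direction exposing
`a` to one exposing `b`, chosen so that no `η` on it is constant on `F_θ`: for small `ε > 0`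
every perturbed maximizer set is then a proper subset of `F_θ`.
-/

open Matrix Finset

open Filter Topology Set AffineMap

theorem exists_pos_of_eventually_nhds_zero {p : ℝ → Prop} (h : ∀ᶠ ε in 𝓝 0, p ε) :
    ∃ ε > 0, p ε :=
  ((h.filter_mono nhdsWithin_le_nhds).and (self_mem_nhdsWithin (s := Ioi 0))).exists.imp
    fun _ h => ⟨h.2, h.1⟩

variable {d : ℕ} {X : Finset (Fin d → ℝ)}

open Classical in
noncomputable def maximizers (X : Finset (Fin d → ℝ)) (θ : Fin d → ℝ) : Finset (Fin d → ℝ) :=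
  {z ∈ X | θ ∈ cellOf d X z}

theorem mem_maximizers {θ z : Fin d → ℝ} :
    z ∈ maximizers X θ ↔ z ∈ X ∧ θ ∈ cellOf d X z := by
  simp only [maximizers, Finset.mem_filter]

theorem maximizers_subset (θ : Fin d → ℝ) : maximizers X θ ⊆ X :=
  fun _ hz => (mem_maximizers.1 hz).1

theorem maximizers_nonempty (hX : X.Nonempty) (θ : Fin d → ℝ) : (maximizers X θ).Nonempty := by
  obtain ⟨z, hz, hmax⟩ := X.exists_max_image (· ⬝ᵥ θ) hX
  exact ⟨z, mem_maximizers.2 ⟨hz, hmax⟩⟩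

theorem dotProduct_eq_of_mem_maximizers {θ y z : Fin d → ℝ} (hy : y ∈ maximizers X θ)
    (hz : z ∈ maximizers X θ) : y ⬝ᵥ θ = z ⬝ᵥ θ :=
  le_antisymm ((mem_maximizers.1 hz).2 y (mem_maximizers.1 hy).1)
    ((mem_maximizers.1 hy).2 z (mem_maximizers.1 hz).1)

theorem maximizers_subset_plausibleSet {C : Set (Fin d → ℝ)} {θ : Fin d → ℝ} (hθ : θ ∈ C) :
    ↑(maximizers X θ) ⊆ plausibleSet d X C :=
  fun _ hz => ⟨(mem_maximizers.1 hz).1, θ, hθ, (mem_maximizers.1 hz).2⟩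

theorem eventually_maximizers_subset (X : Finset (Fin d → ℝ)) (θ : Fin d → ℝ) :
    ∀ᶠ θ' in 𝓝 θ, maximizers X θ' ⊆ maximizers X θ := by
  have hlosers : ∀ z ∈ X, ∀ᶠ θ' in 𝓝 θ, z ∈ maximizers X θ' → z ∈ maximizers X θ := by
    intro z hz
    by_cases hzθ : z ∈ maximizers X θ
    · exact Eventually.of_forall fun _ _ => hzθ
    obtain ⟨y, hy, hlt⟩ : ∃ y ∈ X, z ⬝ᵥ θ < y ⬝ᵥ θ := by
      simpa [mem_maximizers, cellOf, hz] using hzθ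
    have hev : ∀ᶠ θ' in 𝓝 θ, z ⬝ᵥ θ' < y ⬝ᵥ θ' :=
      (continuous_const.dotProduct continuous_id).continuousAt.eventually_lt
        (continuous_const.dotProduct continuous_id).continuousAt hlt
    filter_upwards [hev] with θ' hθ' hzθ'
    exact absurd ((mem_maximizers.1 hzθ').2 y hy) hθ'.not_ge
  filter_upwards [(Finset.eventually_all X).2 hlosers] with θ' h z hz
  exact h z (maximizers_subset θ' hz) hz

theorem eventually_forall_maximizers_add_smul_subset {T : Type*} [TopologicalSpace T]
    {K : Set T} (hK : IsCompact K) {η : T → Fin d → ℝ} (hη : Continuous η) (θ : Fin d → ℝ) :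
    ∀ᶠ ε in 𝓝 (0 : ℝ), ∀ t ∈ K, maximizers X (θ + ε • η t) ⊆ maximizers X θ := by
  refine hK.eventually_forall_of_forall_eventually fun t _ => ?_
  have hcont : Continuous fun p : ℝ × T => θ + p.1 • η p.2 :=
    continuous_const.add (continuous_fst.smul (hη.comp continuous_snd))
  exact (hcont.tendsto' (0, t) θ (by simp)).eventually (eventually_maximizers_subset X θ)

theorem mem_maximizers_add_smul {θ η a : Fin d → ℝ} {ε : ℝ}
    (hsub : maximizers X (θ + ε • η) ⊆ maximizers X θ) (hε : 0 ≤ ε)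
    (ha : a ∈ maximizers X θ) (hη : ∀ z ∈ maximizers X θ, z ⬝ᵥ η ≤ a ⬝ᵥ η) :
    a ∈ maximizers X (θ + ε • η) := by
  refine mem_maximizers.2 ⟨(mem_maximizers.1 ha).1, fun y hy => ?_⟩
  obtain ⟨m, hm⟩ := maximizers_nonempty ⟨y, hy⟩ (θ + ε • η)
  have hmθ := hsub hm
  calc y ⬝ᵥ (θ + ε • η) ≤ m ⬝ᵥ (θ + ε • η) := (mem_maximizers.1 hm).2 y hy
    _ ≤ a ⬝ᵥ (θ + ε • η) := by
      simp only [dotProduct_add, dotProduct_smul, smul_eq_mul,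
        dotProduct_eq_of_mem_maximizers hmθ ha]
      gcongr
      exact hη m hmθ

theorem maximizers_add_smul_ne {θ η a z : Fin d → ℝ} {ε : ℝ} (hε : ε ≠ 0)
    (ha : a ∈ maximizers X θ) (hz : z ∈ maximizers X θ) (hη : z ⬝ᵥ η ≠ a ⬝ᵥ η) :
    maximizers X (θ + ε • η) ≠ maximizers X θ := by
  intro heq
  have h₁ := dotProduct_eq_of_mem_maximizers hz ha
  have h₂ := dotProduct_eq_of_mem_maximizers (heq.symm ▸ hz) (heq.symm ▸ ha)
  simp only [dotProduct_add, dotProduct_smul, smul_eq_mul, h₁, add_right_inj] at h₂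
  exact hη (mul_left_cancel₀ hε h₂)

theorem mem_of_paretoOpt {a : Fin d → ℝ} (ha : paretoOpt d X a) : a ∈ X :=
  extremePoints_convexHull_subset ha

/-- The face of `convexHull X` exposed by `θ` is compact, so it has an extreme point
(Krein–Milman); that point is extreme in the hull as well. -/
theorem exists_paretoOpt_mem_maximizers (hX : X.Nonempty) (θ : Fin d → ℝ) :
    ∃ e ∈ maximizers X θ, paretoOpt d X e := by
  set l : StrongDual ℝ (Fin d → ℝ) :=
    LinearMap.toContinuousLinearMap (dotProductEquiv ℝ (Fin d) θ)
  set K := convexHull ℝ (X : Set (Fin d → ℝ))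
  have hK : IsCompact K := X.finite_toSet.isCompact_convexHull (𝕜 := ℝ)
  have hface : IsExposed ℝ K (l.toExposed K) := ContinuousLinearMap.toExposed.isExposed
  obtain ⟨m, hmK, hmax⟩ := hK.exists_isMaxOn ((Finset.coe_nonempty.2 hX).mono
    (subset_convexHull ℝ _)) l.continuous.continuousOn
  obtain ⟨e, he⟩ := (hface.isCompact hK).extremePoints_nonempty ⟨m, hmK, fun y hy => hmax hy⟩
  have heK : e ∈ extremePoints ℝ K := hface.isExtreme.extremePoints_subset_extremePoints he
  refine ⟨e, mem_maximizers.2 ⟨extremePoints_convexHull_subset heK, fun y hy => ?_⟩, heK⟩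
  simpa [l, dotProduct_comm] using he.1.2 y (subset_convexHull ℝ _ hy)

def IsExposedBy (X : Finset (Fin d → ℝ)) (a η : Fin d → ℝ) : Prop :=
  ∀ z ∈ X, z ≠ a → z ⬝ᵥ η < a ⬝ᵥ η

theorem isOpen_setOf_isExposedBy (X : Finset (Fin d → ℝ)) (a : Fin d → ℝ) :
    IsOpen {η | IsExposedBy X a η} := by
  have : {η | IsExposedBy X a η} = ⋂ z ∈ X.erase a, {η | z ⬝ᵥ η < a ⬝ᵥ η} := by
    ext η
    simp only [IsExposedBy, mem_ofPred_eq, mem_iInter, Finset.mem_erase]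
    exact ⟨fun h z ⟨hza, hz⟩ => h z hz hza, fun h z hz hza => h z ⟨hza, hz⟩⟩
  rw [this]
  exact isOpen_biInter_finset fun z _ =>
    isOpen_lt (continuous_const.dotProduct continuous_id)
      (continuous_const.dotProduct continuous_id)

theorem exists_isExposedBy {a : Fin d → ℝ} (ha : paretoOpt d X a) : ∃ η, IsExposedBy X a η := by
  set K := convexHull ℝ ((X : Set (Fin d → ℝ)) \ {a})
  have haK : a ∉ K := by
    intro h
    exact ((convex_convexHull ℝ _).mem_extremePoints_iff_mem_sdiff_convexHull_sdiff.1 ha).2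
      (convexHull_mono (sdiff_subset_sdiff_left (subset_convexHull ℝ _)) h)
  obtain ⟨f, u, hK, hu⟩ := geometric_hahn_banach_closed_point (convex_convexHull ℝ _)
    ((X.finite_toSet.sdiff).isClosed_convexHull ℝ) haK
  set η := (dotProductEquiv ℝ (Fin d)).symm f.toLinearMap
  have hf : ∀ z, f z = z ⬝ᵥ η := fun z => by
    rw [dotProduct_comm]
    exact (LinearMap.congr_fun ((dotProductEquiv ℝ (Fin d)).apply_symm_apply f.toLinearMap) z).symm
  refine ⟨η, fun z hz hza => ?_⟩
  rw [← hf, ← hf]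
  exact (hK z (subset_convexHull ℝ _ ⟨hz, hza⟩)).trans hu

theorem IsExposedBy.dotProduct_le {a η z : Fin d → ℝ} (h : IsExposedBy X a η) (hz : z ∈ X) :
    z ⬝ᵥ η ≤ a ⬝ᵥ η := by
  rcases eq_or_ne z a with rfl | hza
  · exact le_rfl
  · exact (h z hz hza).le

theorem IsOpen.exists_mem_apply_ne_zero {E : Type*} [AddCommGroup E] [Module ℝ E]
    [TopologicalSpace E] [ContinuousAdd E] [ContinuousSMul ℝ E] {U : Set E} (hU : IsOpen U)
    (hne : U.Nonempty) {f : Module.Dual ℝ E} (hf : f ≠ 0) : ∃ η ∈ U, f η ≠ 0 := by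
  by_contra! h
  refine hf (LinearMap.ker_eq_top.1 ((LinearMap.ker f).eq_top_of_nonempty_interior' ?_))
  exact hne.mono (hU.subset_interior_iff.2 h)

theorem smul_sub_smul_ne_zero {K E : Type*} [Field K] [AddCommGroup E] [Module K E] {u w : E}
    {α β : K} (hβ : β ≠ 0) (hw : ∀ t : K, w ≠ t • u) : α • u - β • w ≠ 0 := by
  intro h
  apply hw (β⁻¹ * α)
  rw [mul_smul, sub_eq_zero.1 h, smul_smul, inv_mul_cancel₀ hβ, one_smul]

theorem dotProduct_lineMap_ne_zero_or {u w η₀ η₁ : Fin d → ℝ} (hu : u ⬝ᵥ η₀ ≠ 0)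
    (h₁ : ((w ⬝ᵥ η₀) • u - (u ⬝ᵥ η₀) • w) ⬝ᵥ η₁ ≠ 0) (s : ℝ) :
    u ⬝ᵥ lineMap η₀ η₁ s ≠ 0 ∨ w ⬝ᵥ lineMap η₀ η₁ s ≠ 0 := by
  by_contra! h
  simp only [lineMap_apply_module, dotProduct_add, dotProduct_smul, smul_eq_mul] at h
  simp only [sub_dotProduct, smul_dotProduct, smul_eq_mul] at h₁
  have hs : s * ((w ⬝ᵥ η₀) * (u ⬝ᵥ η₁) - (u ⬝ᵥ η₀) * (w ⬝ᵥ η₁)) = 0 := by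
    linear_combination (w ⬝ᵥ η₀) * h.1 - (u ⬝ᵥ η₀) * h.2
  rcases mul_eq_zero.1 hs with rfl | hD
  · exact hu (by simpa using h.1)
  · exact h₁ hD

theorem exists_isExposedBy_segment {a b c : Fin d → ℝ} (ha : paretoOpt d X a)
    (hb : paretoOpt d X b) (hab : a ≠ b) (hc : ∀ t : ℝ, c - a ≠ t • (b - a)) :
    ∃ η₀ η₁, IsExposedBy X a η₀ ∧ IsExposedBy X b η₁ ∧
      ∀ s : ℝ, (b - a) ⬝ᵥ lineMap η₀ η₁ s ≠ 0 ∨ (c - a) ⬝ᵥ lineMap η₀ η₁ s ≠ 0 := by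
  obtain ⟨η₀, hη₀⟩ := exists_isExposedBy ha
  have hu : (b - a) ⬝ᵥ η₀ ≠ 0 := by
    rw [sub_dotProduct]
    exact (sub_neg.2 (hη₀ b (mem_of_paretoOpt hb) hab.symm)).ne
  -- `v = ((c - a) ⬝ᵥ η₀) • (b - a) - ((b - a) ⬝ᵥ η₀) • (c - a)` is orthogonal to `η₀`, so
  -- `v ⬝ᵥ η₁ ≠ 0` keeps the segment `[η₀, η₁]` off the common kernel of `b - a` and `c - a`.
  obtain ⟨η₁, hη₁, hv⟩ := (isOpen_setOf_isExposedBy X b).exists_mem_apply_ne_zero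
    (exists_isExposedBy hb)
    ((dotProductEquiv ℝ (Fin d)).map_ne_zero_iff.2
      (smul_sub_smul_ne_zero (α := (c - a) ⬝ᵥ η₀) hu hc))
  exact ⟨η₀, η₁, hη₀, hη₁, dotProduct_lineMap_ne_zero_or hu hv⟩

theorem exists_path_maximizers_ssubset {θ a b c : Fin d → ℝ} (ha : paretoOpt d X a)
    (hb : paretoOpt d X b) (hab : a ≠ b) (haθ : a ∈ maximizers X θ)
    (hbθ : b ∈ maximizers X θ) (hcθ : c ∈ maximizers X θ) (hc : ∀ t : ℝ, c - a ≠ t • (b - a)) :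
    ∃ γ : ℝ → Fin d → ℝ, Continuous γ ∧ a ∈ maximizers X (γ 0) ∧ b ∈ maximizers X (γ 1) ∧
      ∀ s ∈ Icc (0 : ℝ) 1, maximizers X (γ s) ⊂ maximizers X θ := by
  obtain ⟨η₀, η₁, hη₀, hη₁, hne⟩ := exists_isExposedBy_segment ha hb hab hc
  obtain ⟨ε, hε, hsub⟩ := exists_pos_of_eventually_nhds_zero
    (eventually_forall_maximizers_add_smul_subset (isCompact_Icc (a := (0 : ℝ)) (b := 1))
      lineMap_continuous θ)
  refine ⟨fun s => θ + ε • lineMap η₀ η₁ s, by fun_prop, ?_, ?_, fun s hs =>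
    (hsub s hs).ssubset_of_ne ?_⟩
  · have h₀ := hsub 0 (left_mem_Icc.2 zero_le_one)
    simp only [lineMap_apply_zero] at h₀ ⊢
    exact mem_maximizers_add_smul h₀ (le_of_lt hε) haθ fun z hz =>
      hη₀.dotProduct_le (maximizers_subset θ hz)
  · have h₁ := hsub 1 (right_mem_Icc.2 zero_le_one)
    simp only [lineMap_apply_one] at h₁ ⊢
    exact mem_maximizers_add_smul h₁ (le_of_lt hε) hbθ fun z hz =>
      hη₁.dotProduct_le (maximizers_subset θ hz)
  · rcases hne s with h | h <;> rw [sub_dotProduct, sub_ne_zero] at h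
    · exact maximizers_add_smul_ne (ne_of_gt hε) haθ hbθ h
    · exact maximizers_add_smul_ne (ne_of_gt hε) haθ hcθ h

theorem span_cellOf_inter_le_ker {a b : Fin d → ℝ} (ha : a ∈ X) (hb : b ∈ X) :
    Submodule.span ℝ (cellOf d X a ∩ cellOf d X b) ≤
      LinearMap.ker (dotProductEquiv ℝ (Fin d) (a - b)) := by
  rw [Submodule.span_le]
  rintro φ ⟨hφa, hφb⟩
  change (a - b) ⬝ᵥ φ = 0
  rw [sub_dotProduct, sub_eq_zero]
  exact le_antisymm (hφb a ha) (hφa b hb)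

theorem ker_le_span_cellOf_inter {θ a b : Fin d → ℝ} (haθ : a ∈ maximizers X θ)
    (hbθ : b ∈ maximizers X θ) (hline : ∀ z ∈ maximizers X θ, ∃ t : ℝ, z - a = t • (b - a)) :
    LinearMap.ker (dotProductEquiv ℝ (Fin d) (a - b)) ≤
      Submodule.span ℝ (cellOf d X a ∩ cellOf d X b) := by
  intro h hh
  replace hh : b ⬝ᵥ h = a ⬝ᵥ h := by
    change (a - b) ⬝ᵥ h = 0 at hh
    rw [sub_dotProduct, sub_eq_zero] at hh
    exact hh.symm
  have hconst : ∀ z ∈ maximizers X θ, z ⬝ᵥ h = a ⬝ᵥ h := by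
    intro z hz
    obtain ⟨t, ht⟩ := hline z hz
    rw [← sub_eq_zero, ← sub_dotProduct, ht, smul_dotProduct, sub_dotProduct, hh, sub_self,
      smul_zero]
  have hev : ∀ᶠ ε in 𝓝 (0 : ℝ), maximizers X (θ + ε • h) ⊆ maximizers X θ :=
    ((continuous_const.add (continuous_id.smul continuous_const)).tendsto' 0 θ
      (by simp)).eventually (eventually_maximizers_subset X θ)
  obtain ⟨ε, hε, hsub⟩ := exists_pos_of_eventually_nhds_zero hev
  have hmem : ∀ θ', a ∈ maximizers X θ' → b ∈ maximizers X θ' →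
      θ' ∈ Submodule.span ℝ (cellOf d X a ∩ cellOf d X b) := fun θ' ha' hb' =>
    Submodule.subset_span ⟨(mem_maximizers.1 ha').2, (mem_maximizers.1 hb').2⟩
  have hθ := hmem θ haθ hbθ
  have hθε := hmem (θ + ε • h)
    (mem_maximizers_add_smul hsub (le_of_lt hε) haθ fun z hz => (hconst z hz).le)
    (mem_maximizers_add_smul hsub (le_of_lt hε) hbθ fun z hz => ((hconst z hz).trans hh.symm).le)
  have := Submodule.smul_mem _ ε⁻¹ (Submodule.sub_mem _ hθε hθ)
  rwa [add_sub_cancel_left, smul_smul, inv_mul_cancel₀ (ne_of_gt hε), one_smul] at this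

theorem neighborActs_of_collinear {θ a b : Fin d → ℝ} (ha : paretoOpt d X a)
    (hb : paretoOpt d X b) (hab : a ≠ b) (haθ : a ∈ maximizers X θ)
    (hbθ : b ∈ maximizers X θ) (hline : ∀ z ∈ maximizers X θ, ∃ t : ℝ, z - a = t • (b - a)) :
    neighborActs d X a b := by
  refine ⟨ha, hb, ?_⟩
  rw [le_antisymm (span_cellOf_inter_le_ker (mem_of_paretoOpt ha) (mem_of_paretoOpt hb))
    (ker_le_span_cellOf_inter haθ hbθ hline)]
  have := Module.Dual.finrank_ker_add_one_of_ne_zero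
    ((dotProductEquiv ℝ (Fin d)).map_ne_zero_iff.2 (sub_ne_zero.2 hab))
  rw [Module.finrank_fin_fun] at this
  omega

def NeighborChain (X : Finset (Fin d → ℝ)) (Q : Set (Fin d → ℝ)) :
    (Fin d → ℝ) → (Fin d → ℝ) → Prop :=
  Relation.ReflTransGen fun p q => p ∈ Q ∧ q ∈ Q ∧ neighborActs d X p q

theorem NeighborChain.mono {Q Q' : Set (Fin d → ℝ)} (hQ : Q ⊆ Q') {a b : Fin d → ℝ}
    (h : NeighborChain X Q a b) : NeighborChain X Q' a b :=
  Relation.ReflTransGen.mono (fun _ _ ⟨hp, hq, hpq⟩ => ⟨hQ hp, hQ hq, hpq⟩) _ _ h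

theorem NeighborChain.exists_path {Q : Set (Fin d → ℝ)} {a b : Fin d → ℝ} (ha : a ∈ Q)
    (hap : paretoOpt d X a) (h : NeighborChain X Q a b) :
    ∃ (k : ℕ) (f : Fin (k + 1) → (Fin d → ℝ)),
      f 0 = a ∧ f (Fin.last k) = b ∧
      (∀ i, f i ∈ Q ∧ paretoOpt d X (f i)) ∧
      (∀ i : Fin k, neighborActs d X (f i.castSucc) (f i.succ)) := by
  induction h with
  | refl => exact ⟨0, fun _ => a, rfl, rfl, fun _ => ⟨ha, hap⟩, fun i => i.elim0⟩
  | @tail p q _ hpq ih =>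
    obtain ⟨k, f, hf0, hfk, hfQ, hf⟩ := ih
    refine ⟨k + 1, Fin.snoc f q, by rw [← Fin.castSucc_zero, Fin.snoc_castSucc, hf0],
      Fin.snoc_last _ _,
      Fin.lastCases ?_ fun i => ?_, Fin.lastCases ?_ fun i => ?_⟩
    · simpa using ⟨hpq.2.1, hpq.2.2.2.1⟩
    · simpa using hfQ i
    · simpa [hfk] using hpq.2.2
    · rw [Fin.succ_castSucc, Fin.snoc_castSucc, Fin.snoc_castSucc]
      exact hf i

theorem neighborChain_of_isPreconnected {T : Type*} [TopologicalSpace T] {S : Set T}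
    (hS : IsPreconnected S) {γ : T → Fin d → ℝ} (hγ : ContinuousOn γ S) {Q : Set (Fin d → ℝ)}
    (hQ : ∀ t ∈ S, ∀ p q, paretoOpt d X p → paretoOpt d X q → p ∈ maximizers X (γ t) →
      q ∈ maximizers X (γ t) → NeighborChain X Q p q)
    {t₀ t₁ : T} (ht₀ : t₀ ∈ S) (ht₁ : t₁ ∈ S) {a b : Fin d → ℝ} (ha : paretoOpt d X a)
    (hb : paretoOpt d X b) (ha₀ : a ∈ maximizers X (γ t₀)) (hb₁ : b ∈ maximizers X (γ t₁)) :
    NeighborChain X Q a b := by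
  have hX : X.Nonempty := ⟨a, maximizers_subset _ ha₀⟩
  refine hS.induction₂' (fun t t' => ∀ p q, paretoOpt d X p → paretoOpt d X q →
    p ∈ maximizers X (γ t) → q ∈ maximizers X (γ t') → NeighborChain X Q p q)
    (fun t ht => ?_) (fun t t' t'' _ _ _ h h' p q hp hq hpt hqt'' => ?_) ht₀ ht₁ a b ha hb ha₀ hb₁
  · filter_upwards [(hγ t ht).tendsto.eventually (eventually_maximizers_subset X (γ t))]
      with t' ht'
    exact ⟨fun p q hp hq hpt hqt' => hQ t ht p q hp hq hpt (ht' hqt'),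
      fun p q hp hq hpt' hqt => hQ t ht p q hp hq (ht' hpt') hqt⟩
  · obtain ⟨e, het', he⟩ := exists_paretoOpt_mem_maximizers hX (γ t')
    exact (h p e hp he hpt het').trans (h' e q he hq het' hqt'')

theorem neighborChain_maximizers {θ a b : Fin d → ℝ} (ha : paretoOpt d X a)
    (hb : paretoOpt d X b) (haθ : a ∈ maximizers X θ) (hbθ : b ∈ maximizers X θ) :
    NeighborChain X (maximizers X θ) a b := by
  induction hn : (maximizers X θ).card using Nat.strong_induction_on generalizing θ a b with
  | _ n ih =>
  rcases eq_or_ne a b with rfl | hab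
  · exact .refl
  by_cases hline : ∀ z ∈ maximizers X θ, ∃ t : ℝ, z - a = t • (b - a)
  · exact .single ⟨haθ, hbθ, neighborActs_of_collinear ha hb hab haθ hbθ hline⟩
  push Not at hline
  obtain ⟨c, hcθ, hc⟩ := hline
  obtain ⟨γ, hγ, ha₀, hb₁, hss⟩ := exists_path_maximizers_ssubset ha hb hab haθ hbθ hcθ hc
  refine neighborChain_of_isPreconnected isPreconnected_Icc hγ.continuousOn
    (fun s hs p q hp hq hps hqs => ?_) (left_mem_Icc.2 zero_le_one)
    (right_mem_Icc.2 zero_le_one) ha hb ha₀ hb₁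
  exact (ih _ (hn ▸ Finset.card_lt_card (hss s hs)) hp hq hps hqs rfl).mono
    (Finset.coe_subset.2 (hss s hs).subset)

/-- **Lemma lem:neighbors (i).** The Pareto optimal actions within the
plausible maximizer set `P(C)` of a convex set `C` are connected in the neighborhood
graph: any two of them are joined by a finite path of neighboring Pareto optimal actions,
all lying in `P(C)`. -/
theorem stmt16 (d : ℕ) (X : Finset (Fin d → ℝ)) (C : Set (Fin d → ℝ)) (hC : Convex ℝ C)
    (x y : Fin d → ℝ) (hx : x ∈ plausibleSet d X C) (hxp : paretoOpt d X x)
    (hy : y ∈ plausibleSet d X C) (hyp : paretoOpt d X y) :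
    ∃ (k : ℕ) (f : Fin (k + 1) → (Fin d → ℝ)),
      f 0 = x ∧ f (Fin.last k) = y ∧
      (∀ i, f i ∈ plausibleSet d X C ∧ paretoOpt d X (f i)) ∧
      (∀ i : Fin k, neighborActs d X (f i.castSucc) (f i.succ)) := by
  obtain ⟨hxX, θx, hθx, hxθ⟩ := hx
  obtain ⟨hyX, θy, hθy, hyθ⟩ := hy
  have hchain : NeighborChain X (plausibleSet d X C) x y :=
    neighborChain_of_isPreconnected isPreconnected_Icc lineMap_continuous.continuousOn
      (fun s hs p q hp hq hps hqs => (neighborChain_maximizers hp hq hps hqs).mono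
        (maximizers_subset_plausibleSet (hC.lineMap_mem hθx hθy hs)))
      (left_mem_Icc.2 zero_le_one) (right_mem_Icc.2 zero_le_one) hxp hyp
      (by simpa [mem_maximizers] using ⟨hxX, hxθ⟩) (by simpa [mem_maximizers] using ⟨hyX, hyθ⟩)
  exact hchain.exists_path ⟨hxX, θx, hθx, hxθ⟩ hxp
end

section
/- Let X ⊂ ℝ^d be a finite set and C ⊆ ℝ^d a convex set. Then every x ∈ P(C) lies in the convex hull of the set of Pareto optimal actions belonging to P(C); that is, P(C) ⊆ conv(P(C) ∩ ext(conv X)), where ext(conv X) denotes the extreme points of the convex hull of X. -/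
open Matrix Finset

/-!
Fix `x ∈ P(C)`, optimal for some `θ ∈ C`. The face `F` of `conv X` exposed by `θ` contains
`x`. As an exposed face of a polytope, `F` is compact and convex, and its extreme points are
extreme points of `conv X`; by Krein–Milman (with finitely many extreme points, so no closure is
needed) `x ∈ conv (ext F)`. Each extreme point of `F` is a point of `X` maximizing `θ`, hence
lies in `P(C)`.
-/

section ExposedFace

variable {E : Type*} [AddCommGroup E] [Module ℝ E] [TopologicalSpace E] [T2Space E]
  [IsTopologicalAddGroup E] [ContinuousSMul ℝ E] [LocallyConvexSpace ℝ E] {A B : Set E}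

theorem IsExposed.subset_convexHull_inter_extremePoints (hB : IsExposed ℝ A B)
    (hA : IsCompact A) (hAconv : Convex ℝ A) (hext : (A.extremePoints ℝ).Finite) :
    B ⊆ convexHull ℝ (B ∩ A.extremePoints ℝ) := by
  have hBext : B.extremePoints ℝ = B ∩ A.extremePoints ℝ := hB.isExtreme.extremePoints_eq
  have hfin : (B.extremePoints ℝ).Finite := hext.subset (hBext ▸ Set.inter_subset_right)
  rw [← hBext, ← (hfin.isClosed_convexHull ℝ).closure_eq,
    closure_convexHull_extremePoints (hB.isCompact hA) (hB.convex hAconv)]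

theorem Finset.subset_convexHull_inter_extremePoints_of_isExposed (X : Finset E)
    (hB : IsExposed ℝ (convexHull ℝ (X : Set E)) B) :
    B ⊆ convexHull ℝ (B ∩ (convexHull ℝ (X : Set E)).extremePoints ℝ) :=
  hB.subset_convexHull_inter_extremePoints (X.finite_toSet.isCompact_convexHull ℝ)
    (convex_convexHull ℝ _) (X.finite_toSet.subset extremePoints_convexHull_subset)

end ExposedFace

theorem stmt17_general (d : ℕ) (X : Finset (Fin d → ℝ)) (C : Set (Fin d → ℝ)) :
    plausibleSet d X C ⊆ convexHull ℝ
      (plausibleSet d X C ∩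
        Set.extremePoints ℝ (convexHull ℝ (X : Set (Fin d → ℝ)))) := by
  rintro x ⟨hxX, θ, hθC, hθx⟩
  let l : StrongDual ℝ (Fin d → ℝ) :=
    LinearMap.toContinuousLinearMap ((dotProductBilin ℝ ℝ).flip θ)
  have hxF : x ∈ l.toExposed (convexHull ℝ (X : Set (Fin d → ℝ))) :=
    ⟨subset_convexHull ℝ _ hxX, fun z hz =>
      convexHull_min hθx (convex_halfSpace_le l.isLinear _) hz⟩
  refine convexHull_mono ?_
    (X.subset_convexHull_inter_extremePoints_of_isExposed
      ContinuousLinearMap.toExposed.isExposed hxF)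
  rintro e ⟨⟨-, hθe⟩, he⟩
  exact ⟨⟨extremePoints_convexHull_subset he, θ, hθC, fun y hy =>
    hθe y (subset_convexHull ℝ _ hy)⟩, he⟩

/-- **Lemma lem:neighbors (iii).** Every plausible maximizer lies in the
convex hull of the Pareto optimal (extreme) plausible maximizers. -/
theorem stmt17 (d : ℕ) (X : Finset (Fin d → ℝ)) (C : Set (Fin d → ℝ)) (hC : Convex ℝ C) :
    plausibleSet d X C ⊆ convexHull ℝ
      (plausibleSet d X C ∩
        Set.extremePoints ℝ (convexHull ℝ (X : Set (Fin d → ℝ)))) :=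
  stmt17_general d X C
end

section
/- Let X ⊂ ℝ^d be a finite nonempty set, V ∈ ℝ^{d×d} symmetric positive definite, θ̂ ∈ ℝ^d, and β > 0. Define the upper confidence bound UCB(x) = ⟨x, θ̂⟩ + √β·‖x‖_{V^{-1}}, the relaxed gap estimate Δ̃(x) = max_{y∈X} UCB(y) − (⟨x, θ̂⟩ − √β·‖x‖_{V^{-1}}), and the information gain Ĩ(x) = ‖x‖²_{V^{-1}}. Then for every x ∈ X, Δ̃(x)² ≥ 4·β·Ĩ(x), and any x* ∈ X maximizing UCB over X satisfies Δ̃(x*)² = 4·β·Ĩ(x*). Consequently, the UCB action minimizes the deterministic information ratio Δ̃(·)²/Ĩ(·) over all x ∈ X with Ĩ(x) > 0. -/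
open Matrix Finset

/-- The upper confidence bound of an action. -/
noncomputable def ucb (d : ℕ) (V : Matrix (Fin d) (Fin d) ℝ) (θh : Fin d → ℝ) (β : ℝ)
    (x : Fin d → ℝ) : ℝ :=
  x ⬝ᵥ θh + Real.sqrt β * Real.sqrt (x ⬝ᵥ (V⁻¹ *ᵥ x))

/-- The relaxed gap estimate `Δ̃(x) = max_{y ∈ X} UCB(y) − (⟨x, θ̂⟩ − √β ‖x‖_{V⁻¹})`. -/
noncomputable def relaxedGap (d : ℕ) (X : Finset (Fin d → ℝ)) (hX : X.Nonempty)
    (V : Matrix (Fin d) (Fin d) ℝ) (θh : Fin d → ℝ) (β : ℝ) (x : Fin d → ℝ) : ℝ :=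
  X.sup' hX (ucb d V θh β) - (x ⬝ᵥ θh - Real.sqrt β * Real.sqrt (x ⬝ᵥ (V⁻¹ *ᵥ x)))

/-- The information gain `Ĩ(x) = ‖x‖²_{V⁻¹}`. -/
noncomputable def infoTilde (d : ℕ) (V : Matrix (Fin d) (Fin d) ℝ) (x : Fin d → ℝ) : ℝ :=
  x ⬝ᵥ (V⁻¹ *ᵥ x)

/-! The relaxed gap of `x` is `max UCB − UCB(x) + 2 √β ‖x‖_{V⁻¹}`, so it is at least the width
`2 √β ‖x‖_{V⁻¹}` of the confidence interval at `x`, with equality exactly at a UCB maximizer.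
Squaring turns this into `Δ̃(x)² ≥ 4 β Ĩ(x)` with equality at the UCB action, whose information
ratio is therefore `4 β`, the least possible value (or `0 / 0 = 0` when `Ĩ(x*) = 0`). -/

lemma sq_two_mul_sqrt_mul_sqrt {a b : ℝ} (ha : 0 ≤ a) (hb : 0 ≤ b) :
    (2 * (Real.sqrt a * Real.sqrt b)) ^ 2 = 4 * a * b := by
  rw [mul_pow, mul_pow, Real.sq_sqrt ha, Real.sq_sqrt hb]
  ring

lemma div_le_div_of_eq_mul_of_mul_le {a b c u v : ℝ} (hc : 0 ≤ c) (ha : a = c * u)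
    (hb : c * v ≤ b) (hv : 0 < v) : a / u ≤ b / v :=
  calc a / u = c * (u / u) := by rw [ha, mul_div_assoc]
    _ ≤ c := mul_le_of_le_one_right hc (div_self_le_one u)
    _ ≤ b / v := (le_div_iff₀ hv).2 (by simpa [mul_comm] using hb)

lemma infoTilde_nonneg {d : ℕ} {V : Matrix (Fin d) (Fin d) ℝ} (hV : V.PosDef) (x : Fin d → ℝ) :
    0 ≤ infoTilde d V x :=
  hV.inv.posSemidef.dotProduct_mulVec_nonneg x

section RelaxedGap

variable {d : ℕ} {X : Finset (Fin d → ℝ)} (hX : X.Nonempty) {V : Matrix (Fin d) (Fin d) ℝ}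
  {θh : Fin d → ℝ} {β : ℝ} {x : Fin d → ℝ}

lemma relaxedGap_eq_sup'_sub_ucb_add :
    relaxedGap d X hX V θh β x = X.sup' hX (ucb d V θh β) - ucb d V θh β x
      + 2 * (Real.sqrt β * Real.sqrt (infoTilde d V x)) := by
  unfold relaxedGap ucb infoTilde
  ring

lemma two_mul_sqrt_mul_sqrt_le_relaxedGap (hx : x ∈ X) :
    2 * (Real.sqrt β * Real.sqrt (infoTilde d V x)) ≤ relaxedGap d X hX V θh β x := by
  rw [relaxedGap_eq_sup'_sub_ucb_add]
  linarith [X.le_sup' (ucb d V θh β) hx]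

lemma relaxedGap_eq_of_forall_ucb_le (hx : x ∈ X)
    (hmax : ∀ y ∈ X, ucb d V θh β y ≤ ucb d V θh β x) :
    relaxedGap d X hX V θh β x = 2 * (Real.sqrt β * Real.sqrt (infoTilde d V x)) := by
  rw [relaxedGap_eq_sup'_sub_ucb_add,
    le_antisymm (X.sup'_le hX _ hmax) (X.le_sup' (ucb d V θh β) hx), sub_self, zero_add]

lemma four_mul_infoTilde_le_relaxedGap_sq (hβ : 0 ≤ β) (hV : V.PosDef) (hx : x ∈ X) :
    4 * β * infoTilde d V x ≤ relaxedGap d X hX V θh β x ^ 2 := by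
  rw [← sq_two_mul_sqrt_mul_sqrt hβ (infoTilde_nonneg hV x)]
  exact pow_le_pow_left₀ (by positivity) (two_mul_sqrt_mul_sqrt_le_relaxedGap hX hx) 2

lemma relaxedGap_sq_eq_of_forall_ucb_le (hβ : 0 ≤ β) (hV : V.PosDef) (hx : x ∈ X)
    (hmax : ∀ y ∈ X, ucb d V θh β y ≤ ucb d V θh β x) :
    relaxedGap d X hX V θh β x ^ 2 = 4 * β * infoTilde d V x := by
  rw [relaxedGap_eq_of_forall_ucb_le hX hx hmax,
    sq_two_mul_sqrt_mul_sqrt hβ (infoTilde_nonneg hV x)]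

end RelaxedGap

/-- **UCB and deterministic IDS.** For every `x ∈ X` we have
`Δ̃(x)² ≥ 4 β Ĩ(x)`; any UCB maximizer `x*` satisfies `Δ̃(x*)² = 4 β Ĩ(x*)`; consequently a
UCB maximizer minimizes the deterministic information ratio `Δ̃(·)²/Ĩ(·)` over all actions
with positive information gain. -/
theorem stmt18 (d : ℕ) (X : Finset (Fin d → ℝ)) (hX : X.Nonempty)
    (V : Matrix (Fin d) (Fin d) ℝ) (hV : V.PosDef) (θh : Fin d → ℝ) (β : ℝ) (hβ : 0 < β) :
    (∀ x ∈ X, 4 * β * infoTilde d V x ≤ (relaxedGap d X hX V θh β x) ^ 2) ∧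
    (∀ x ∈ X, (∀ y ∈ X, ucb d V θh β y ≤ ucb d V θh β x) →
      (relaxedGap d X hX V θh β x) ^ 2 = 4 * β * infoTilde d V x) ∧
    (∀ x ∈ X, (∀ y ∈ X, ucb d V θh β y ≤ ucb d V θh β x) →
      ∀ z ∈ X, 0 < infoTilde d V z →
        (relaxedGap d X hX V θh β x) ^ 2 / infoTilde d V x ≤
          (relaxedGap d X hX V θh β z) ^ 2 / infoTilde d V z) := by
  refine ⟨fun x hx => four_mul_infoTilde_le_relaxedGap_sq hX hβ.le hV hx,
    fun x hx hmax => relaxedGap_sq_eq_of_forall_ucb_le hX hβ.le hV hx hmax,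
    fun x hx hmax z hz hIz => ?_⟩
  rw [relaxedGap_sq_eq_of_forall_ucb_le hX hβ.le hV hx hmax]
  exact div_le_div_of_eq_mul_of_mul_le (by positivity) rfl
    (four_mul_infoTilde_le_relaxedGap_sq hX hβ.le hV hz) hIz
end
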